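/- arXiv:math/0607293 — 2 statements merged into one kernel-verified Lean document; each statement's English description precedes it below -/
import Mathlib

section
/- (Exit-time tail bound.) In the anisotropic gradient-type environment, assume in addition: (i) the family (P_{x,ω})_{x∈ℝ^d} satisfies the Markov property; (ii) for each ω there are jointly measurable transition densities p_ω(t,x,y) with P_{x,ω}[X_t ∈ A] = ∫_A p_ω(t,x,y) dy, satisfying p_ω(t,x,y) ≤ c̃ t^{−d/2} exp(−c|x−y|²/t) for all 0 < t ≤ 1, x, y, ω, for constants c̃, c > 0; (iii) with m_ω(dx) = e^{2ψ(x,ω)} dx and killed semigroup (P^t_{ω,U} f)(x) = E_{x,ω}[f(X_t) 1_{T_U > t}], there is c₃ > 0 such that sup over ω and nonempty open U of the L²(m_ω) operator norm of P^t_{ω,U} is at most e^{−c₃ t} for every t > 0. Then for every δ ∈ (0,1) and b > 0 there is a constant c₄ = c₄(δ,b,η) > 0 such that for every unit vector ℓ' with ℓ'·ℓ > √(1−δ²) and every L > 0: sup_{ω∈Ω} P_{0,ω}[T_{V_{ℓ',δ}} ≥ (3λ/c₃)L] ≤ c₄ e^{−(λ/2)L}. -/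
/-!
Wait one unit of time: by the Gaussian bound, the law of `X₁` under `P_{0,ω}` has density at
most `Q(y) = c̃ e^{-c|y|²}`. By the Markov property, the probability of then staying in the
cylinder `U` for a further time `t` is `∫ g(y) P_{0,ω}[X₁ ∈ dy]`, where `g = P^t_{ω,U} 1_U`.
Young's inequality, pairing `L²(e^{2ψ} dy)` with `L²(e^{-2ψ} dy)`, splits this integral into
`‖g‖²_{L²(m_ω)}`, which the spectral gap bounds by `e^{-2c₃t} m_ω(U) ≤ e^{-2c₃t} e^{2η+4λL} |U|`,
and `∫ Q² e^{-2ψ}`, which is finite because `ψ` grows at most linearly. For `t ≈ 3λL/c₃` the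
gap beats the weight `e^{4λL}` on the cylinder by a factor `e^{-λL}`, which leaves room for the
polynomial volume `|U| ≲ L^d`.

Measurability of `y ↦ P_{y,ω}[·]` comes from the translation covariance
`P_{y,ω} = (P_{0,t_y ω})` shifted by `y`, a consequence of uniqueness for the martingale problem.
-/

open MeasureTheory ProbabilityTheory Filter Set
open scoped NNReal RealInnerProductSpace ENNReal

noncomputable section

abbrev EucSp (d : ℕ) : Type := EuclideanSpace ℝ (Fin d)

abbrev PathSp (d : ℕ) : Type := C(ℝ≥0, EucSp d)

instance pathMS (d : ℕ) : MeasurableSpace (PathSp d) := borel _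
instance pathBorel (d : ℕ) : BorelSpace (PathSp d) := ⟨rfl⟩

/-- `i`-th canonical basis vector of `ℝ^d`. -/
def ebasis (d : ℕ) (i : Fin d) : EucSp d := EuclideanSpace.single i 1

/-- The differential operator `L f = (1/2) ∑ aᵢⱼ ∂²ᵢⱼ f + ∑ bᵢ ∂ᵢ f`. -/
def gen {d : ℕ} (a : EucSp d → Fin d → Fin d → ℝ) (bvec : EucSp d → EucSp d)
    (f : EucSp d → ℝ) (x : EucSp d) : ℝ :=
  (1 / 2) * ∑ i, ∑ j, a x i j *
      fderiv ℝ (fun y => fderiv ℝ f y (ebasis d j)) x (ebasis d i)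
    + ∑ i, bvec x i * fderiv ℝ f x (ebasis d i)

/-- canonical filtration on path space: σ-algebra generated by evaluations up to time `s`. -/
def pathσ (d : ℕ) (s : ℝ≥0) : MeasurableSpace (PathSp d) :=
  ⨆ r ∈ Set.Iic s, MeasurableSpace.comap (fun w : PathSp d => w r) inferInstance

/-- bounded functions of class C². -/
def IsBddC2 {d : ℕ} (f : EucSp d → ℝ) : Prop :=
  ContDiff ℝ 2 f ∧ ∃ M, ∀ x, |f x| ≤ M

/-- The process `f(X_t) - ∫_0^t L f(X_s) ds` associated to the martingale problem. -/
def mpFun {d : ℕ} (a : EucSp d → Fin d → Fin d → ℝ) (bvec : EucSp d → EucSp d)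
    (f : EucSp d → ℝ) (t : ℝ≥0) (w : PathSp d) : ℝ :=
  f (w t) - ∫ s in (0:ℝ)..(t:ℝ), gen a bvec f (w s.toNNReal)

/-- `Q` is a solution of the martingale problem for the operator attached to `a`, `bvec`,
started at `x`. -/
def IsMPSol {d : ℕ} (a : EucSp d → Fin d → Fin d → ℝ) (bvec : EucSp d → EucSp d)
    (x : EucSp d) (Q : Measure (PathSp d)) : Prop :=
  IsProbabilityMeasure Q ∧ (∀ᵐ w ∂Q, w 0 = x) ∧
  ∀ f : EucSp d → ℝ, IsBddC2 f →
    (∀ t : ℝ≥0, Integrable (mpFun a bvec f t) Q) ∧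
    ∀ s t : ℝ≥0, s ≤ t → ∀ A : Set (PathSp d), MeasurableSet[pathσ d s] A →
      ∫ w in A, mpFun a bvec f t w ∂Q = ∫ w in A, mpFun a bvec f s w ∂Q

/-- exit time from `U` (equal to `0` by convention if the path never leaves `U`). -/
def exitTime {d : ℕ} (U : Set (EucSp d)) (w : PathSp d) : ℝ≥0 :=
  sInf {t : ℝ≥0 | w t ∉ U}

/-- the slab `U_{ℓ,b,L}`. -/
def slab {d : ℕ} (ℓ : EucSp d) (b L : ℝ) : Set (EucSp d) :=
  {x | -(b * L) < ⟪x, ℓ⟫ ∧ ⟪x, ℓ⟫ < L}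

/-- the event that the diffusion leaves the slab `U_{ℓ,b,L}` on the left. -/
def badSlabExit {d : ℕ} (ℓ : EucSp d) (b L : ℝ) : Set (PathSp d) :=
  {w | (∃ t : ℝ≥0, w t ∉ slab ℓ b L) ∧ ⟪w (exitTime (slab ℓ b L) w), ℓ⟫ < 0}

/-- Condition (T) relative to the direction `ℓ`, for the (annealed) law `P0`. -/
def CondT {d : ℕ} (P0 : Measure (PathSp d)) (ℓ : EucSp d) : Prop :=
  ∃ ε > (0:ℝ), ∀ ℓ' : EucSp d, ‖ℓ'‖ = 1 → ‖ℓ' - ℓ‖ < ε → ∀ b > (0:ℝ),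
    limsup (fun L : ℝ => (L⁻¹ : EReal) * ENNReal.log (P0 (badSlabExit ℓ' b L))) atTop < 0

/-- identity diffusion matrix. -/
def idMat (d : ℕ) : EucSp d → Fin d → Fin d → ℝ := fun _ i j => if i = j then 1 else 0

/-- the drift `b(x,ω) = ∇ψ(x,ω) = ∇φ(x,ω) + λℓ`. -/
def gradDrift {d : ℕ} {Ω : Type*} (T : EucSp d → Ω → Ω) (φ0 : Ω → ℝ)
    (lam : ℝ) (ℓ : EucSp d) (ω : Ω) (x : EucSp d) : EucSp d :=
  gradient (fun y => φ0 (T y ω)) x + lam • ℓ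

/-- Assumptions on the anisotropic gradient-type random environment: `φ` is a bounded
stationary potential with bounded and Lipschitz continuous gradient, and the quenched
laws `P x ω` are the unique solutions of the martingale problems attached to `a = Id`,
`b(·,ω) = ∇φ(·,ω) + λℓ`. -/
def GradEnv (d : ℕ) (η β' K : ℝ) {Ω : Type*} [MeasurableSpace Ω] (Pr : Measure Ω)
    (T : EucSp d → Ω → Ω) (φ0 : Ω → ℝ) (lam : ℝ) (ℓ : EucSp d)
    (P : EucSp d → Ω → Measure (PathSp d)) : Prop :=
  IsProbabilityMeasure Pr ∧
  T 0 = id ∧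
  (∀ x y, T (x + y) = T x ∘ T y) ∧
  Measurable (fun p : EucSp d × Ω => T p.1 p.2) ∧
  (∀ x, MeasurePreserving (T x) Pr Pr) ∧
  Measurable φ0 ∧
  (∀ ω, |φ0 ω| ≤ η) ∧
  (∀ ω, Differentiable ℝ fun x => φ0 (T x ω)) ∧
  (∀ ω (x : EucSp d), ‖gradient (fun y => φ0 (T y ω)) x‖ ≤ β') ∧
  (∀ ω (y z : EucSp d),
      ‖gradient (fun y' => φ0 (T y' ω)) y - gradient (fun y' => φ0 (T y' ω)) z‖ ≤ K * ‖y - z‖) ∧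
  (∀ x : EucSp d, Measurable fun ω => P x ω) ∧
  (∀ x ω, IsMPSol (idMat d) (gradDrift T φ0 lam ℓ ω) x (P x ω)) ∧
  (∀ x ω Q, IsMPSol (idMat d) (gradDrift T φ0 lam ℓ ω) x Q → Q = P x ω)

/-- the cylinder `V_{ℓ',δ}` (with parameters `b`, `L`), radius `ρ`. -/
def cyl {d : ℕ} (ℓ' : EucSp d) (b L ρ : ℝ) : Set (EucSp d) :=
  {x | -(b * L) < ⟪x, ℓ'⟫ ∧ ⟪x, ℓ'⟫ < L ∧ ‖x - ⟪x, ℓ'⟫ • ℓ'‖ < ρ}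

/-- the potential `ψ(x,ω) = φ(x,ω) + λ ℓ·x`. -/
def psiF {d : ℕ} {Ω : Type*} (T : EucSp d → Ω → Ω) (φ0 : Ω → ℝ)
    (lam : ℝ) (ℓ : EucSp d) (ω : Ω) (x : EucSp d) : ℝ :=
  φ0 (T x ω) + lam * ⟪ℓ, x⟫

/-- time shift on path space. -/
def shift {d : ℕ} (s : ℝ≥0) (w : PathSp d) : PathSp d :=
  ⟨fun t => w (s + t), w.continuous.comp (by fun_prop)⟩

/-- the killed semigroup `(P^t_{ω,U} f)(x) = E_{x,ω}[f(X_t), T_U > t]`. -/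
def killedSg {d : ℕ} {Ω : Type*} [MeasurableSpace Ω]
    (P : EucSp d → Ω → Measure (PathSp d)) (ω : Ω) (U : Set (EucSp d)) (t : ℝ≥0)
    (f : EucSp d → ℝ) (x : EucSp d) : ℝ :=
  ∫ w, Set.indicator {w' : PathSp d | ∀ s ≤ t, w' s ∈ U} (fun w' => f (w' t)) w ∂(P x ω)

/-- the full semigroup `(P^t_ω f)(x) = E_{x,ω}[f(X_t)]`. -/
def fullSg {d : ℕ} {Ω : Type*} [MeasurableSpace Ω]
    (P : EucSp d → Ω → Measure (PathSp d)) (ω : Ω) (t : ℝ≥0)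
    (f : EucSp d → ℝ) (x : EucSp d) : ℝ :=
  ∫ w, f (w t) ∂(P x ω)

section RealInequalities

lemma mul_le_young {a b m s : ℝ} (hm : 0 < m) (hs : 0 < s) :
    a * b ≤ s / 2 * (a ^ 2 * m) + 1 / (2 * s) * (b ^ 2 / m) := by
  have key : s / 2 * (a ^ 2 * m) + 1 / (2 * s) * (b ^ 2 / m) - a * b =
      (s * a * m - b) ^ 2 / (2 * s * m) := by
    field_simp
    ring
  have : 0 ≤ (s * a * m - b) ^ 2 / (2 * s * m) := by positivity
  linarith

lemma pow_le_factorial_mul_exp {x : ℝ} (hx : 0 ≤ x) (n : ℕ) :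
    x ^ n ≤ n.factorial * Real.exp x :=
  (div_le_iff₀' (by positivity)).1 (Real.pow_div_factorial_le_exp x hx n)

/-- Completing the square `2 λ r ≤ λ² / c + c r²` trades the linear growth of `-2ψ` for half of
the Gaussian decay. -/
lemma sq_gaussian_div_exp_le {ct c η lam r ψ : ℝ} (hc : 0 < c) (hψ : -ψ ≤ η + lam * r) :
    (ct * Real.exp (-(c * r ^ 2))) ^ 2 / Real.exp (2 * ψ) ≤
      ct ^ 2 * Real.exp (2 * η + lam ^ 2 / c) * Real.exp (-(c * r ^ 2)) := by
  have hsplit : (ct * Real.exp (-(c * r ^ 2))) ^ 2 / Real.exp (2 * ψ) =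
      ct ^ 2 * Real.exp (-(2 * c * r ^ 2) - 2 * ψ) := by
    rw [Real.exp_sub, show -(2 * c * r ^ 2) = -(c * r ^ 2) + -(c * r ^ 2) by ring,
      Real.exp_add]
    ring
  have hsquare : 0 ≤ (c * r - lam) ^ 2 / c := by positivity
  have hexpand : (c * r - lam) ^ 2 / c = c * r ^ 2 - 2 * lam * r + lam ^ 2 / c := by
    field_simp
    ring
  rw [hsplit, mul_assoc (ct ^ 2), ← Real.exp_add]
  gcongr
  linarith

/-- The weight `s = e^{λL - 2c₃}` in Young's inequality balances the two terms once
`c₃ t = 3λL - 2c₃`. -/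
lemma young_exponents_le {lam L c₃ η t A B : ℝ} (hlamL : 0 ≤ lam * L) (hB : 0 ≤ B)
    (ht : c₃ * t = 3 * lam * L - 2 * c₃) :
    Real.exp (lam * L - 2 * c₃) / 2 * (Real.exp (-2 * c₃ * t) *
        (Real.exp (2 * (η + lam * (2 * L))) * (A * Real.exp (lam * L / 2))))
      + 1 / (2 * Real.exp (lam * L - 2 * c₃)) * B ≤
      Real.exp (2 * c₃) / 2 * (Real.exp (2 * η) * A + B) * Real.exp (-(lam / 2) * L) := by
  have hfirst : Real.exp (lam * L - 2 * c₃) / 2 * (Real.exp (-2 * c₃ * t) *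
      (Real.exp (2 * (η + lam * (2 * L))) * (A * Real.exp (lam * L / 2)))) =
      Real.exp (2 * c₃) / 2 * (Real.exp (2 * η) * A) * Real.exp (-(lam / 2) * L) := by
    have hsum : lam * L - 2 * c₃ + -2 * c₃ * t + 2 * (η + lam * (2 * L)) + lam * L / 2 =
        2 * c₃ + 2 * η + -(lam / 2) * L := by linear_combination (-2) * ht
    calc _ = A / 2 * Real.exp (lam * L - 2 * c₃ + -2 * c₃ * t + 2 * (η + lam * (2 * L))
          + lam * L / 2) := by simp only [Real.exp_add]; ring
      _ = _ := by rw [hsum]; simp only [Real.exp_add]; ring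
  have hsecond : 1 / (2 * Real.exp (lam * L - 2 * c₃)) * B ≤
      Real.exp (2 * c₃) / 2 * B * Real.exp (-(lam / 2) * L) := by
    have hinv : 1 / (2 * Real.exp (lam * L - 2 * c₃)) =
        Real.exp (2 * c₃) / 2 * Real.exp (-(lam * L)) := by
      rw [Real.exp_sub, Real.exp_neg]
      field_simp
    rw [hinv, mul_right_comm]
    gcongr
    linarith
  rw [hfirst]
  linarith

end RealInequalities

section Integration

variable {α : Type*} [MeasurableSpace α]

lemma ofReal_integral_le_lintegral_ofReal {μ : Measure α} (f : α → ℝ) :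
    ENNReal.ofReal (∫ x, f x ∂μ) ≤ ∫⁻ x, ENNReal.ofReal (f x) ∂μ := by
  by_cases hf : Integrable f μ
  · rw [integral_eq_lintegral_pos_part_sub_lintegral_neg_part hf]
    exact (ENNReal.ofReal_le_ofReal (sub_le_self _ ENNReal.toReal_nonneg)).trans
      ENNReal.ofReal_toReal_le
  · simp [integral_undef hf]

lemma le_withDensity_ofReal {μ ν : Measure α} {q Q : α → ℝ}
    (hν : ∀ A, MeasurableSet A → ν A = ENNReal.ofReal (∫ y in A, q y ∂μ)) (hqQ : q ≤ Q) :
    ν ≤ μ.withDensity fun y => ENNReal.ofReal (Q y) := by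
  refine Measure.le_iff.2 fun A hA => ?_
  rw [hν A hA, withDensity_apply _ hA]
  exact (ofReal_integral_le_lintegral_ofReal q).trans
    (lintegral_mono fun y => ENNReal.ofReal_le_ofReal (hqQ y))

lemma integral_le_young_of_le_withDensity {μ ν : Measure α} {g Q m : α → ℝ}
    (hμ : μ ≤ ν.withDensity fun y => ENNReal.ofReal (Q y))
    (hg : Measurable g) (hg0 : 0 ≤ g) (hgμ : Integrable g μ) (hQ : Measurable Q) (hQ0 : 0 ≤ Q)
    (hm : ∀ y, 0 < m y) (hgm : Integrable (fun y => g y ^ 2 * m y) ν)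
    (hQm : Integrable (fun y => Q y ^ 2 / m y) ν) {s : ℝ} (hs : 0 < s) :
    ∫ y, g y ∂μ ≤ s / 2 * ∫ y, g y ^ 2 * m y ∂ν + 1 / (2 * s) * ∫ y, Q y ^ 2 / m y ∂ν := by
  have hsum : Integrable (fun y => s / 2 * (g y ^ 2 * m y) + 1 / (2 * s) * (Q y ^ 2 / m y)) ν :=
    (hgm.const_mul _).add (hQm.const_mul _)
  have hsum0 : ∀ y, 0 ≤ s / 2 * (g y ^ 2 * m y) + 1 / (2 * s) * (Q y ^ 2 / m y) := fun y => by
    have := hm y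
    positivity
  rw [← integral_const_mul, ← integral_const_mul, ← integral_add (hgm.const_mul _)
    (hQm.const_mul _), ← ENNReal.ofReal_le_ofReal_iff (integral_nonneg hsum0),
    ofReal_integral_eq_lintegral_ofReal hgμ (ae_of_all _ hg0),
    ofReal_integral_eq_lintegral_ofReal hsum (ae_of_all _ hsum0)]
  calc ∫⁻ y, ENNReal.ofReal (g y) ∂μ
      ≤ ∫⁻ y, ENNReal.ofReal (g y) ∂(ν.withDensity fun y => ENNReal.ofReal (Q y)) :=
        lintegral_mono' hμ le_rfl
    _ = ∫⁻ y, ENNReal.ofReal (Q y * g y) ∂ν := by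
        rw [lintegral_withDensity_eq_lintegral_mul _ hQ.ennreal_ofReal hg.ennreal_ofReal]
        simp only [Pi.mul_apply, ENNReal.ofReal_mul (hQ0 _)]
    _ ≤ _ := lintegral_mono fun y => ENNReal.ofReal_le_ofReal <| by
        simpa only [mul_comm (Q y)] using mul_le_young (a := g y) (b := Q y) (hm y) hs

lemma setIntegral_exp_le {μ : Measure α} {f : α → ℝ} {U : Set α} (hU : μ U < ⊤) {M : ℝ}
    (hf : ∀ x ∈ U, f x ≤ M) : ∫ x in U, Real.exp (f x) ∂μ ≤ Real.exp M * μ.real U :=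
  (le_abs_self _).trans <| norm_setIntegral_le_of_norm_le_const (f := fun x => Real.exp (f x))
    hU fun x hx => by simpa using hf x hx

end Integration

section Euclidean

variable {d : ℕ}

lemma integrable_exp_neg_mul_norm_sq {c : ℝ} (hc : 0 < c) :
    Integrable fun v : EucSp d => Real.exp (-(c * ‖v‖ ^ 2)) := by
  have h := GaussianFourier.integrable_cexp_neg_mul_sq_norm_add
    (V := EucSp d) (b := (c : ℂ)) (by simpa using hc) 0 (0 : EucSp d)
  refine h.norm.congr (ae_of_all _ fun v => ?_)
  simp [Complex.norm_exp, ← Complex.ofReal_pow]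

lemma volume_real_le_of_subset_closedBall {U : Set (EucSp d)} {R : ℝ} (hR : 0 ≤ R)
    (hU : U ⊆ Metric.closedBall 0 R) :
    volume.real U ≤ R ^ d * volume.real (Metric.ball (0 : EucSp d) 1) := by
  refine (measureReal_mono hU measure_closedBall_lt_top.ne).trans_eq ?_
  rw [Measure.real, Measure.addHaar_closedBall _ _ hR, finrank_euclideanSpace_fin,
    ENNReal.toReal_mul, ENNReal.toReal_ofReal (by positivity)]
  rfl

end Euclidean

section PathTranslation

variable {d : ℕ}

def pathAdd (y : EucSp d) : PathSp d ≃ᵐ PathSp d :=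
  (Homeomorph.addRight (ContinuousMap.const ℝ≥0 y)).toMeasurableEquiv

@[simp] lemma pathAdd_apply (y : EucSp d) (w : PathSp d) (t : ℝ≥0) :
    pathAdd y w t = w t + y := rfl

lemma measurable_pathAdd_uncurry :
    Measurable fun q : EucSp d × PathSp d => pathAdd q.1 q.2 :=
  (continuous_snd.add (ContinuousMap.continuous_const'.comp continuous_fst)).measurable

lemma measurable_eval_pathσ {r s : ℝ≥0} (hr : r ≤ s) :
    Measurable[pathσ d s] fun w : PathSp d => w r :=
  measurable_iff_comap_le.2 <|
    le_iSup₂ (f := fun r _ => MeasurableSpace.comap (fun w : PathSp d => w r) inferInstance) r hr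

lemma measurable_pathσ_of_eval {m : MeasurableSpace (PathSp d)} {s : ℝ≥0}
    {F : PathSp d → PathSp d} (hF : ∀ r ≤ s, Measurable[m] fun w => F w r) :
    Measurable[m, pathσ d s] F := by
  rw [measurable_iff_comap_le]
  simp only [pathσ, MeasurableSpace.comap_iSup]
  refine iSup₂_le fun r hr => ?_
  rw [MeasurableSpace.comap_comp]
  exact measurable_iff_comap_le.1 (hF r hr)

lemma measurable_pathAdd_pathσ (y : EucSp d) (s : ℝ≥0) :
    Measurable[pathσ d s, pathσ d s] (pathAdd y) :=
  measurable_pathσ_of_eval fun _ hr => (measurable_eval_pathσ hr).add_const y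

lemma gen_comp_add_right (a : EucSp d → Fin d → Fin d → ℝ) (b : EucSp d → EucSp d)
    (f : EucSp d → ℝ) (y x : EucSp d) :
    gen (fun z => a (z + y)) (fun z => b (z + y)) (fun z => f (z + y)) x = gen a b f (x + y) := by
  have hsecond : ∀ j, fderiv ℝ (fun z => fderiv ℝ f (z + y) (ebasis d j)) x =
      fderiv ℝ (fun z => fderiv ℝ f z (ebasis d j)) (x + y) := fun j =>
    fderiv_comp_add_right (f := fun z => fderiv ℝ f z (ebasis d j)) y
  simp only [gen, fderiv_comp_add_right, hsecond]

lemma mpFun_comp_pathAdd (a : EucSp d → Fin d → Fin d → ℝ) (b : EucSp d → EucSp d)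
    (f : EucSp d → ℝ) (y : EucSp d) (t : ℝ≥0) :
    mpFun a b f t ∘ pathAdd y =
      mpFun (fun z => a (z + y)) (fun z => b (z + y)) (fun z => f (z + y)) t := by
  ext w
  simp only [Function.comp_apply, mpFun, pathAdd_apply, gen_comp_add_right]

lemma IsBddC2.comp_add_right {f : EucSp d → ℝ} (hf : IsBddC2 f) (y : EucSp d) :
    IsBddC2 fun z => f (z + y) :=
  ⟨hf.1.comp (contDiff_id.add contDiff_const), hf.2.imp fun _ hM z => hM (z + y)⟩

lemma IsMPSol.map_pathAdd {a : EucSp d → Fin d → Fin d → ℝ} {b : EucSp d → EucSp d}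
    {x y : EucSp d} {Q : Measure (PathSp d)}
    (hQ : IsMPSol (fun z => a (z + y)) (fun z => b (z + y)) x Q) :
    IsMPSol a b (x + y) (Q.map (pathAdd y)) := by
  obtain ⟨hprob, hstart, hmart⟩ := hQ
  refine ⟨Measure.isProbabilityMeasure_map (pathAdd y).measurable.aemeasurable, ?_,
    fun f hf => ?_⟩
  · rw [(pathAdd y).measurableEmbedding.ae_map_iff]
    filter_upwards [hstart] with w hw
    simp [hw]
  obtain ⟨hint, hmg⟩ := hmart _ (hf.comp_add_right y)
  refine ⟨fun t => ?_, fun s t hst A hA => ?_⟩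
  · rw [integrable_map_equiv (pathAdd y), mpFun_comp_pathAdd]
    exact hint t
  · simp only [setIntegral_map_equiv, ← Function.comp_apply (f := mpFun a b f _),
      mpFun_comp_pathAdd]
    exact hmg s t hst _ (measurable_pathAdd_pathσ y s hA)

lemma continuous_shift (s : ℝ≥0) : Continuous (shift (d := d) s) :=
  ContinuousMap.continuous_precomp (ContinuousMap.addLeft s)

lemma isOpen_setOf_forall_le_mem {U : Set (EucSp d)} (hU : IsOpen U) (t : ℝ≥0) :
    IsOpen {w : PathSp d | ∀ s ≤ t, w s ∈ U} := by
  simpa [MapsTo] using ContinuousMap.isOpen_setOfPred_mapsTo (isCompact_Icc (a := 0) (b := t)) hU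

end PathTranslation

lemma gradDrift_translate {d : ℕ} {Ω : Type*} {T : EucSp d → Ω → Ω} {φ0 : Ω → ℝ} {lam : ℝ}
    {ℓ : EucSp d} (hTadd : ∀ x y, T (x + y) = T x ∘ T y) (ω : Ω) (y : EucSp d) :
    gradDrift T φ0 lam ℓ (T y ω) = fun z => gradDrift T φ0 lam ℓ ω (z + y) := by
  have hφ : (fun z => φ0 (T z (T y ω))) = fun z => φ0 (T (z + y) ω) := by
    simp [hTadd]
  ext1 z
  simp only [gradDrift, gradient, hφ, fderiv_comp_add_right (f := fun z => φ0 (T z ω))]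

section QuenchedLaws

variable {d : ℕ} {η β' K lam : ℝ} {Ω : Type} [MeasurableSpace Ω] {Pr : Measure Ω}
  {T : EucSp d → Ω → Ω} {φ0 : Ω → ℝ} {ℓ : EucSp d} {P : EucSp d → Ω → Measure (PathSp d)}

lemma GradEnv.isProbabilityMeasure (henv : GradEnv d η β' K Pr T φ0 lam ℓ P) (x : EucSp d)
    (ω : Ω) : IsProbabilityMeasure (P x ω) := by
  obtain ⟨-, -, -, -, -, -, -, -, -, -, -, hMP, -⟩ := henv
  exact (hMP x ω).1

lemma GradEnv.ae_eval_zero (henv : GradEnv d η β' K Pr T φ0 lam ℓ P) (x : EucSp d)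
    (ω : Ω) : ∀ᵐ w ∂(P x ω), w 0 = x := by
  obtain ⟨-, -, -, -, -, -, -, -, -, -, -, hMP, -⟩ := henv
  exact (hMP x ω).2.1

/-- Translation covariance, by uniqueness for the martingale problem. -/
lemma GradEnv.eq_map_pathAdd (henv : GradEnv d η β' K Pr T φ0 lam ℓ P) (ω : Ω) (y : EucSp d) :
    P y ω = (P 0 (T y ω)).map (pathAdd y) := by
  obtain ⟨-, -, hTadd, -, -, -, -, -, -, -, -, hMP, huniq⟩ := henv
  have hsol := hMP 0 (T y ω)
  rw [gradDrift_translate hTadd] at hsol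
  exact (huniq y ω _ (by simpa using hsol.map_pathAdd (a := idMat d))).symm

lemma GradEnv.measurable_apply (henv : GradEnv d η β' K Pr T φ0 lam ℓ P) (ω : Ω)
    {G : Set (PathSp d)} (hG : MeasurableSet G) : Measurable fun y => P y ω G := by
  have hprob := henv.isProbabilityMeasure
  have hshift := henv.eq_map_pathAdd ω
  obtain ⟨-, -, -, hTm, -, -, -, -, -, -, hPm, -, -⟩ := henv
  let κ : Kernel (EucSp d) (PathSp d) :=
    ⟨fun y => P 0 (T y ω), (hPm 0).comp (hTm.comp (measurable_id.prodMk measurable_const))⟩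
  have : IsMarkovKernel κ := ⟨fun y => hprob 0 (T y ω)⟩
  convert Kernel.measurable_kernel_prodMk_left (κ := κ) (measurable_pathAdd_uncurry hG)
    using 2 with y
  rw [hshift y, Measure.map_apply (pathAdd y).measurable hG]
  rfl

lemma GradEnv.measureReal_stay_eq_zero (henv : GradEnv d η β' K Pr T φ0 lam ℓ P) (ω : Ω)
    {U : Set (EucSp d)} (t : ℝ≥0) {y : EucSp d} (hy : y ∉ U) :
    (P y ω).real {w | ∀ r ≤ t, w r ∈ U} = 0 := by
  have := henv.isProbabilityMeasure y ω
  refine (measureReal_eq_zero_iff (measure_ne_top _ _)).2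
    (measure_mono_null ?_ (ae_iff.1 (henv.ae_eval_zero y ω)))
  exact fun w hw h0 => hy (h0 ▸ hw 0 zero_le)

lemma GradEnv.integrable_sq_measureReal_stay_mul (henv : GradEnv d η β' K Pr T φ0 lam ℓ P)
    (ω : Ω) {U : Set (EucSp d)} (hU : IsOpen U) (t : ℝ≥0) {m : EucSp d → ℝ}
    (hm : Measurable m) (hmU : IntegrableOn m U) (hm0 : 0 ≤ m) :
    Integrable fun y => (P y ω).real {w | ∀ r ≤ t, w r ∈ U} ^ 2 * m y := by
  have := henv.isProbabilityMeasure
  have hg := (henv.measurable_apply ω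
    (isOpen_setOf_forall_le_mem hU t).measurableSet).ennreal_toReal
  refine (hmU.integrable_indicator hU.measurableSet).mono'
    ((hg.pow_const 2).mul hm).aestronglyMeasurable (ae_of_all _ fun y => ?_)
  by_cases hy : y ∈ U
  · rw [indicator_of_mem hy, Real.norm_eq_abs, abs_of_nonneg (mul_nonneg (sq_nonneg _) (hm0 y))]
    exact mul_le_of_le_one_left (hm0 y) (pow_le_one₀ measureReal_nonneg measureReal_le_one)
  · simp [henv.measureReal_stay_eq_zero ω t hy, hy]

end QuenchedLaws

section KilledSemigroup

variable {d : ℕ} {Ω : Type} {P : EucSp d → Ω → Measure (PathSp d)}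

lemma killedSg_indicator_one [MeasurableSpace Ω] {U : Set (EucSp d)} (hU : IsOpen U) (ω : Ω)
    (t : ℝ≥0) :
    killedSg P ω U t (U.indicator 1) = fun x => (P x ω).real {w | ∀ s ≤ t, w s ∈ U} := by
  ext x
  rw [killedSg, ← integral_indicator_one (isOpen_setOf_forall_le_mem hU t).measurableSet]
  congr 1 with w
  by_cases hw : w ∈ {w : PathSp d | ∀ s ≤ t, w s ∈ U}
  · simp [indicator_of_mem hw, indicator_of_mem (hw t le_rfl)]
  · simp [indicator_of_notMem hw]

lemma measureReal_shift_preimage (hMarkov : ∀ (x : EucSp d) (ω : Ω) (s : ℝ≥0)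
      (F : PathSp d → ℝ), Measurable F → (∃ M, ∀ w, |F w| ≤ M) →
      ∀ A : Set (PathSp d), MeasurableSet[pathσ d s] A →
        ∫ w in A, F (shift s w) ∂(P x ω) = ∫ w in A, (∫ w', F w' ∂(P (w s) ω)) ∂(P x ω))
    (x : EucSp d) (ω : Ω) (s : ℝ≥0) {G : Set (PathSp d)} (hG : MeasurableSet G) :
    (P x ω).real (shift s ⁻¹' G) = ∫ w, (P (w s) ω).real G ∂(P x ω) := by
  have hF : ∀ w, |G.indicator (1 : PathSp d → ℝ) w| ≤ 1 := fun w => by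
    by_cases hw : w ∈ G <;> simp [hw]
  have h := hMarkov x ω s _ (measurable_one.indicator hG) ⟨1, hF⟩ univ MeasurableSet.univ
  simp only [Measure.restrict_univ, integral_indicator_one hG] at h
  rw [← h, ← integral_indicator_one (hG.preimage (continuous_shift s).measurable)]
  rfl

end KilledSemigroup

lemma GradEnv.measureReal_shift_stay_le {d : ℕ} {η β' K lam c₃ : ℝ} {Ω : Type}
    [MeasurableSpace Ω] {Pr : Measure Ω} {T : EucSp d → Ω → Ω} {φ0 : Ω → ℝ} {ℓ : EucSp d}
    {P : EucSp d → Ω → Measure (PathSp d)} (henv : GradEnv d η β' K Pr T φ0 lam ℓ P)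
    (hMarkov : ∀ (x : EucSp d) (ω : Ω) (s : ℝ≥0) (F : PathSp d → ℝ),
      Measurable F → (∃ M, ∀ w, |F w| ≤ M) →
      ∀ A : Set (PathSp d), MeasurableSet[pathσ d s] A →
        ∫ w in A, F (shift s w) ∂(P x ω) = ∫ w in A, (∫ w', F w' ∂(P (w s) ω)) ∂(P x ω))
    {ω : Ω} {m Q : EucSp d → ℝ}
    (hgap : ∀ U : Set (EucSp d), U.Nonempty → IsOpen U →
      ∀ (t : ℝ≥0) (f : EucSp d → ℝ), Measurable f → Integrable (fun x => f x ^ 2 * m x) →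
      ∫ x, killedSg P ω U t f x ^ 2 * m x ≤ Real.exp (-2 * c₃ * t) * ∫ x, f x ^ 2 * m x)
    (hm : Continuous m) (hm0 : ∀ x, 0 < m x)
    (hlaw : (P 0 ω).map (fun w => w 1) ≤ volume.withDensity fun y => ENNReal.ofReal (Q y))
    (hQ : Measurable Q) (hQ0 : 0 ≤ Q) (hQm : Integrable fun y => Q y ^ 2 / m y)
    {U : Set (EucSp d)} (hU : IsOpen U) (hUb : Bornology.IsBounded U) (hU0 : U.Nonempty)
    (t : ℝ≥0) {s : ℝ} (hs : 0 < s) :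
    (P 0 ω).real (shift 1 ⁻¹' {w | ∀ r ≤ t, w r ∈ U}) ≤
      s / 2 * (Real.exp (-2 * c₃ * t) * ∫ x in U, m x) + 1 / (2 * s) * ∫ y, Q y ^ 2 / m y := by
  have hprob := henv.isProbabilityMeasure
  have hG := (isOpen_setOf_forall_le_mem hU t).measurableSet
  set g : EucSp d → ℝ := fun y => (P y ω).real {w | ∀ r ≤ t, w r ∈ U}
  have hg : Measurable g := (henv.measurable_apply ω hG).ennreal_toReal
  have hmU : IntegrableOn m U :=
    (hm.continuousOn.integrableOn_compact hUb.isCompact_closure).mono_set subset_closure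
  have hgm := henv.integrable_sq_measureReal_stay_mul ω hU t hm.measurable hmU fun x => (hm0 x).le
  have hgap_g : ∫ y, g y ^ 2 * m y ≤ Real.exp (-2 * c₃ * t) * ∫ x in U, m x := by
    have hsq : ∀ x, U.indicator (1 : EucSp d → ℝ) x ^ 2 * m x = U.indicator m x := fun x => by
      by_cases hx : x ∈ U <;> simp [hx]
    have h := hgap U hU0 hU t (U.indicator 1) (measurable_one.indicator hU.measurableSet)
      (by simpa only [hsq] using hmU.integrable_indicator hU.measurableSet)
    rwa [killedSg_indicator_one hU, funext hsq, integral_indicator hU.measurableSet] at h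
  have heval : Measurable fun w : PathSp d => w 1 :=
    (ContinuousEvalConst.continuous_eval_const 1).measurable
  have hgμ : Integrable g ((P 0 ω).map fun w => w 1) := by
    have := Measure.isProbabilityMeasure_map (μ := P 0 ω) heval.aemeasurable
    exact (integrable_const 1).mono' hg.aestronglyMeasurable
      (ae_of_all _ fun y => by
        rw [Real.norm_eq_abs, abs_of_nonneg measureReal_nonneg]
        exact measureReal_le_one)
  calc (P 0 ω).real (shift 1 ⁻¹' {w | ∀ r ≤ t, w r ∈ U})
      = ∫ w, g (w 1) ∂(P 0 ω) := measureReal_shift_preimage hMarkov 0 ω 1 hG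
    _ = ∫ y, g y ∂((P 0 ω).map fun w => w 1) :=
        (integral_map heval.aemeasurable hg.aestronglyMeasurable).symm
    _ ≤ s / 2 * (∫ y, g y ^ 2 * m y) + 1 / (2 * s) * ∫ y, Q y ^ 2 / m y :=
        integral_le_young_of_le_withDensity hlaw hg (fun y => measureReal_nonneg) hgμ hQ hQ0
          hm0 hgm hQm hs
    _ ≤ _ := by gcongr

section CylinderGeometry

lemma norm_sub_inner_smul_le {E : Type*} [NormedAddCommGroup E] [InnerProductSpace ℝ E]
    {ℓ ℓ' : E} (hℓ : ‖ℓ‖ = 1) (hℓ' : ‖ℓ'‖ = 1) {δ : ℝ} (hδ : 0 ≤ δ)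
    (hip : √(1 - δ ^ 2) < ⟪ℓ', ℓ⟫) : ‖ℓ - ⟪ℓ', ℓ⟫ • ℓ'‖ ≤ δ := by
  set c := ⟪ℓ', ℓ⟫
  have hc : 0 < c := (Real.sqrt_nonneg _).trans_lt hip
  have hsq : ‖ℓ - c • ℓ'‖ ^ 2 = 1 - c ^ 2 := by
    rw [norm_sub_sq_real, norm_smul, real_inner_smul_right, real_inner_comm, hℓ, hℓ',
      Real.norm_eq_abs, abs_of_pos hc]
    ring
  have hδc : 1 - δ ^ 2 < c ^ 2 := (Real.sqrt_lt' hc).1 hip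
  exact (pow_le_pow_iff_left₀ (norm_nonneg _) hδ two_ne_zero).1 (by linarith)

variable {d : ℕ} {ℓ ℓ' x : EucSp d} {b L ρ : ℝ}

lemma inner_le_of_mem_cyl (hℓ' : ‖ℓ'‖ = 1) (hc0 : 0 ≤ ⟪ℓ', ℓ⟫) (hc1 : ⟪ℓ', ℓ⟫ ≤ 1)
    (hL : 0 ≤ L) (hx : x ∈ cyl ℓ' b L ρ) : ⟪ℓ, x⟫ ≤ L + ρ * ‖ℓ - ⟪ℓ', ℓ⟫ • ℓ'‖ := by
  obtain ⟨-, hs, hz⟩ := hx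
  set s := ⟪x, ℓ'⟫
  set c := ⟪ℓ', ℓ⟫
  have hdecomp : ⟪ℓ, x⟫ = s * c + ⟪x - s • ℓ', ℓ - c • ℓ'⟫ := by
    simp only [inner_sub_left, inner_sub_right, real_inner_smul_left, real_inner_smul_right,
      real_inner_self_eq_norm_sq, hℓ', real_inner_comm x ℓ]
    ring
  have hsc : s * c ≤ L := by
    rcases le_total 0 s with h | h <;> nlinarith
  have hperp : ⟪x - s • ℓ', ℓ - c • ℓ'⟫ ≤ ρ * ‖ℓ - c • ℓ'‖ :=
    (real_inner_le_norm _ _).trans (mul_le_mul_of_nonneg_right hz.le (norm_nonneg _))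
  linarith

lemma inner_le_two_mul_of_mem_cyl (hℓ : ‖ℓ‖ = 1) (hℓ' : ‖ℓ'‖ = 1) {δ : ℝ} (hδ0 : 0 < δ)
    (hδ1 : δ ≤ 1) (hL : 0 ≤ L) (hip : √(1 - δ ^ 2) < ⟪ℓ', ℓ⟫)
    (hx : x ∈ cyl ℓ' b L (L / √δ)) : ⟪ℓ, x⟫ ≤ 2 * L := by
  have hc1 : ⟪ℓ', ℓ⟫ ≤ 1 := (real_inner_le_norm ℓ' ℓ).trans_eq (by rw [hℓ, hℓ', one_mul])
  have hx' := inner_le_of_mem_cyl hℓ' ((Real.sqrt_nonneg _).trans hip.le) hc1 hL hx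
  have hsqrt : 0 < √δ := Real.sqrt_pos.2 hδ0
  have hρδ : L / √δ * δ ≤ L := by
    have : L / √δ * δ = L * √δ := by
      rw [div_mul_eq_mul_div, div_eq_iff hsqrt.ne', mul_assoc, Real.mul_self_sqrt hδ0.le]
    rw [this]
    exact mul_le_of_le_one_right hL (Real.sqrt_le_one.2 hδ1)
  nlinarith [norm_sub_inner_smul_le hℓ hℓ' hδ0.le hip, div_nonneg hL hsqrt.le]

lemma cyl_subset_closedBall (hℓ' : ‖ℓ'‖ = 1) (hb : 0 ≤ b) (hL : 0 ≤ L) :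
    cyl ℓ' b L ρ ⊆ Metric.closedBall 0 ((1 + b) * L + ρ) := by
  rintro x ⟨hs₁, hs₂, hz⟩
  have hs : |⟪x, ℓ'⟫| ≤ (1 + b) * L := abs_le.2 ⟨by nlinarith, by nlinarith⟩
  rw [mem_closedBall_zero_iff]
  calc ‖x‖ = ‖⟪x, ℓ'⟫ • ℓ' + (x - ⟪x, ℓ'⟫ • ℓ')‖ := by rw [add_sub_cancel]
    _ ≤ |⟪x, ℓ'⟫| + ‖x - ⟪x, ℓ'⟫ • ℓ'‖ := by
        grw [norm_add_le, norm_smul, hℓ', mul_one, Real.norm_eq_abs]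
    _ ≤ (1 + b) * L + ρ := add_le_add hs hz.le

lemma isOpen_cyl : IsOpen (cyl ℓ' b L ρ) := by
  have h : Continuous fun x : EucSp d => ⟪x, ℓ'⟫ := continuous_id.inner continuous_const
  exact (isOpen_lt continuous_const h).inter ((isOpen_lt h continuous_const).inter
    (isOpen_lt (continuous_id.sub (h.smul continuous_const)).norm continuous_const))

lemma zero_mem_cyl (hb : 0 < b) (hL : 0 < L) (hρ : 0 < ρ) : (0 : EucSp d) ∈ cyl ℓ' b L ρ := by
  simp only [cyl, mem_ofPred_eq, inner_zero_left, zero_smul, sub_zero, norm_zero]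
  exact ⟨by nlinarith, hL, hρ⟩

end CylinderGeometry

section Potential

variable {d : ℕ} {Ω : Type*} {T : EucSp d → Ω → Ω} {φ0 : Ω → ℝ} {η lam : ℝ} {ℓ : EucSp d}

lemma continuous_psiF (hφ : ∀ ω, Differentiable ℝ fun x => φ0 (T x ω)) (ω : Ω) :
    Continuous (psiF T φ0 lam ℓ ω) :=
  (hφ ω).continuous.add (continuous_const.mul (continuous_const.inner continuous_id))

lemma psiF_le (hφ : ∀ ω, |φ0 ω| ≤ η) (ω : Ω) (x : EucSp d) :
    psiF T φ0 lam ℓ ω x ≤ η + lam * ⟪ℓ, x⟫ := by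
  unfold psiF
  linarith [(abs_le.1 (hφ (T x ω))).2]

lemma neg_psiF_le (hφ : ∀ ω, |φ0 ω| ≤ η) (hℓ : ‖ℓ‖ = 1) (hlam : 0 ≤ lam) (ω : Ω)
    (x : EucSp d) : -psiF T φ0 lam ℓ ω x ≤ η + lam * ‖x‖ := by
  have hφx := (abs_le.1 (hφ (T x ω))).1
  have hx := (abs_le.1 (abs_real_inner_le_norm ℓ x)).1
  rw [hℓ, one_mul] at hx
  unfold psiF
  nlinarith

lemma setIntegral_exp_two_psiF_cyl_le (hφ : ∀ ω, |φ0 ω| ≤ η) (hℓ : ‖ℓ‖ = 1) (hlam : 0 < lam)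
    {ℓ' : EucSp d} (hℓ' : ‖ℓ'‖ = 1) {δ b L : ℝ} (hδ0 : 0 < δ) (hδ1 : δ ≤ 1) (hb : 0 ≤ b)
    (hL : 0 < L) (hip : √(1 - δ ^ 2) < ⟪ℓ', ℓ⟫) (ω : Ω) :
    ∫ x in cyl ℓ' b L (L / √δ), Real.exp (2 * psiF T φ0 lam ℓ ω x) ≤
      Real.exp (2 * (η + lam * (2 * L))) * ((2 * (1 + b + 1 / √δ) / lam) ^ d * d.factorial *
        volume.real (Metric.ball (0 : EucSp d) 1) * Real.exp (lam * L / 2)) := by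
  set Cρ := 1 + b + 1 / √δ
  have hball : cyl ℓ' b L (L / √δ) ⊆ Metric.closedBall 0 (Cρ * L) :=
    (cyl_subset_closedBall hℓ' hb hL.le).trans_eq (by congr 1; ring)
  have hexp : ∀ x ∈ cyl ℓ' b L (L / √δ), 2 * psiF T φ0 lam ℓ ω x ≤ 2 * (η + lam * (2 * L)) :=
    fun x hx => by
      have := inner_le_two_mul_of_mem_cyl hℓ hℓ' hδ0 hδ1 hL.le hip hx
      linarith [psiF_le (T := T) (lam := lam) (ℓ := ℓ) hφ ω x,
        mul_le_mul_of_nonneg_left this hlam.le]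
  have hR : (Cρ * L) ^ d ≤ (2 * Cρ / lam) ^ d * d.factorial * Real.exp (lam * L / 2) := by
    rw [show Cρ * L = 2 * Cρ / lam * (lam * L / 2) by field_simp, mul_pow, mul_assoc]
    gcongr
    exact pow_le_factorial_mul_exp (by positivity) d
  calc _ ≤ Real.exp (2 * (η + lam * (2 * L))) * volume.real (cyl ℓ' b L (L / √δ)) :=
        setIntegral_exp_le (Metric.isBounded_closedBall.subset hball).measure_lt_top hexp
    _ ≤ Real.exp (2 * (η + lam * (2 * L))) *
        ((Cρ * L) ^ d * volume.real (Metric.ball (0 : EucSp d) 1)) := by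
        gcongr
        exact volume_real_le_of_subset_closedBall (by positivity) hball
    _ ≤ Real.exp (2 * (η + lam * (2 * L))) * ((2 * Cρ / lam) ^ d * d.factorial *
        Real.exp (lam * L / 2) * volume.real (Metric.ball (0 : EucSp d) 1)) := by gcongr
    _ = _ := by ring

lemma integrable_sq_gaussian_div_exp_two_psiF (hφd : ∀ ω, Differentiable ℝ fun x => φ0 (T x ω))
    (hφ : ∀ ω, |φ0 ω| ≤ η) (hℓ : ‖ℓ‖ = 1) (hlam : 0 ≤ lam) (ct : ℝ) {c : ℝ} (hc : 0 < c)
    (ω : Ω) : Integrable fun y : EucSp d =>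
      (ct * Real.exp (-(c * ‖y‖ ^ 2))) ^ 2 / Real.exp (2 * psiF T φ0 lam ℓ ω y) := by
  refine ((integrable_exp_neg_mul_norm_sq hc).const_mul
    (ct ^ 2 * Real.exp (2 * η + lam ^ 2 / c))).mono' ?_ (ae_of_all _ fun y => ?_)
  · exact (Continuous.div (by fun_prop) (continuous_const.mul (continuous_psiF hφd ω)).rexp
      fun y => (Real.exp_pos _).ne').aestronglyMeasurable
  · rw [Real.norm_eq_abs, abs_of_nonneg (by positivity)]
    exact sq_gaussian_div_exp_le hc (neg_psiF_le hφ hℓ hlam ω y)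

end Potential

lemma GradEnv.exists_measureReal_stay_in_cyl_le {d : ℕ} {η β' K lam c₃ ct cg : ℝ} {Ω : Type}
    [MeasurableSpace Ω] {Pr : Measure Ω} {T : EucSp d → Ω → Ω} {φ0 : Ω → ℝ} {ℓ : EucSp d}
    {P : EucSp d → Ω → Measure (PathSp d)} {p : Ω → ℝ≥0 → EucSp d → EucSp d → ℝ}
    (henv : GradEnv d η β' K Pr T φ0 lam ℓ P) (hlam : 0 < lam) (hℓ : ‖ℓ‖ = 1)
    (hct : 0 < ct) (hcg : 0 < cg) (hc₃ : 0 < c₃)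
    (hMarkov : ∀ (x : EucSp d) (ω : Ω) (s : ℝ≥0) (F : PathSp d → ℝ),
      Measurable F → (∃ M, ∀ w, |F w| ≤ M) →
      ∀ A : Set (PathSp d), MeasurableSet[pathσ d s] A →
        ∫ w in A, F (shift s w) ∂(P x ω) = ∫ w in A, (∫ w', F w' ∂(P (w s) ω)) ∂(P x ω))
    (hp : ∀ (ω) (x : EucSp d) (t : ℝ≥0), 0 < t → ∀ A : Set (EucSp d), MeasurableSet A →
      P x ω {w | w t ∈ A} = ENNReal.ofReal (∫ y in A, p ω t x y))
    (hgauss : ∀ (ω) (x y : EucSp d) (t : ℝ≥0), 0 < t → (t : ℝ) ≤ 1 →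
      p ω t x y ≤ ct * (t : ℝ) ^ (-(d : ℝ) / 2) * Real.exp (-(cg * ‖x - y‖ ^ 2) / t))
    (hgap : ∀ (ω) (U : Set (EucSp d)), U.Nonempty → IsOpen U →
      ∀ (t : ℝ≥0) (f : EucSp d → ℝ), Measurable f →
      Integrable (fun x => (f x) ^ 2 * Real.exp (2 * psiF T φ0 lam ℓ ω x)) volume →
      ∫ x, (killedSg P ω U t f x) ^ 2 * Real.exp (2 * psiF T φ0 lam ℓ ω x) ≤
        Real.exp (-2 * c₃ * (t : ℝ)) * ∫ x, (f x) ^ 2 * Real.exp (2 * psiF T φ0 lam ℓ ω x))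
    {δ b : ℝ} (hδ0 : 0 < δ) (hδ1 : δ < 1) (hb : 0 < b) :
    ∃ C, ∀ ℓ' : EucSp d, ‖ℓ'‖ = 1 → √(1 - δ ^ 2) < ⟪ℓ', ℓ⟫ → ∀ L > (0 : ℝ),
      2 ≤ 3 * lam / c₃ * L → ∀ ω : Ω,
        (P 0 ω).real {w | ∀ t : ℝ≥0, (t : ℝ) < 3 * lam / c₃ * L →
          w t ∈ cyl ℓ' b L (L / √δ)} ≤ C * Real.exp (-(lam / 2) * L) := by
  have hφb : ∀ ω, |φ0 ω| ≤ η := henv.2.2.2.2.2.2.1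
  have hφd : ∀ ω, Differentiable ℝ fun x => φ0 (T x ω) := henv.2.2.2.2.2.2.2.1
  set Q : EucSp d → ℝ := fun y => ct * Real.exp (-(cg * ‖y‖ ^ 2))
  set C₁ := ct ^ 2 * Real.exp (2 * η + lam ^ 2 / cg)
  refine ⟨Real.exp (2 * c₃) / 2 * (Real.exp (2 * η) * ((2 * (1 + b + 1 / √δ) / lam) ^ d *
    d.factorial * volume.real (Metric.ball (0 : EucSp d) 1)) +
    C₁ * ∫ y : EucSp d, Real.exp (-(cg * ‖y‖ ^ 2))), fun ℓ' hℓ' hip L hL hlarge ω => ?_⟩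
  have := henv.isProbabilityMeasure 0 ω
  set U := cyl ℓ' b L (L / √δ)
  set t : ℝ≥0 := (3 * lam / c₃ * L - 2).toNNReal
  have ht : (t : ℝ) = 3 * lam / c₃ * L - 2 := Real.coe_toNNReal _ (by linarith)
  have hc₃t : c₃ * t = 3 * lam * L - 2 * c₃ := by
    rw [ht]
    field_simp
  have hsub : {w : PathSp d | ∀ t : ℝ≥0, (t : ℝ) < 3 * lam / c₃ * L → w t ∈ U} ⊆
      shift 1 ⁻¹' {w | ∀ r ≤ t, w r ∈ U} := fun w hw r hr => hw (1 + r) <| by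
    have : (r : ℝ) ≤ t := hr
    push_cast
    linarith
  have hlaw : (P 0 ω).map (fun w => w 1) ≤ volume.withDensity fun y => ENNReal.ofReal (Q y) :=
    le_withDensity_ofReal (fun A hA => by
      rw [Measure.map_apply (ContinuousEvalConst.continuous_eval_const 1).measurable hA]
      exact hp ω 0 1 one_pos A hA)
      (fun y => by simpa [Q] using hgauss ω 0 y 1 one_pos le_rfl)
  have hQm := integrable_sq_gaussian_div_exp_two_psiF hφd hφb hℓ hlam.le ct hcg ω
  have hstay := henv.measureReal_shift_stay_le (U := U) hMarkov (hgap ω)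
    (continuous_const.mul (continuous_psiF hφd ω)).rexp (fun x => Real.exp_pos _) hlaw
    (by fun_prop) (fun y => by positivity) hQm isOpen_cyl
    (Metric.isBounded_closedBall.subset (cyl_subset_closedBall hℓ' hb.le hL.le))
    ⟨0, zero_mem_cyl hb hL (by positivity)⟩ t (Real.exp_pos (lam * L - 2 * c₃))
  calc _ ≤ (P 0 ω).real (shift 1 ⁻¹' {w | ∀ r ≤ t, w r ∈ U}) :=
        measureReal_mono hsub (measure_ne_top _ _)
    _ ≤ _ := hstay
    _ ≤ _ := by
        gcongr
        · exact setIntegral_exp_two_psiF_cyl_le hφb hℓ hlam hℓ' hδ0 hδ1.le hb.le hL hip ω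
        · exact (integral_mono hQm ((integrable_exp_neg_mul_norm_sq hcg).const_mul C₁)
            fun y => sq_gaussian_div_exp_le hcg (neg_psiF_le hφb hℓ hlam.le ω y)).trans_eq
              (integral_const_mul _ _)
    _ ≤ _ := young_exponents_le (by positivity) (by positivity) hc₃t

theorem exit_time_tail_gradient_type_general (d : ℕ) (η β' K : ℝ)
    (Ω : Type) [MeasurableSpace Ω] (Pr : Measure Ω)
    (T : EucSp d → Ω → Ω) (φ0 : Ω → ℝ)
    (lam : ℝ) (hlam : 0 < lam) (ℓ : EucSp d) (hℓ : ‖ℓ‖ = 1)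
    (P : EucSp d → Ω → Measure (PathSp d))
    (henv : GradEnv d η β' K Pr T φ0 lam ℓ P)
    -- (i) Markov property of the quenched laws
    (hMarkov : ∀ (x : EucSp d) (ω : Ω) (s : ℝ≥0) (F : PathSp d → ℝ),
      Measurable F → (∃ M, ∀ w, |F w| ≤ M) →
      ∀ A : Set (PathSp d), MeasurableSet[pathσ d s] A →
        ∫ w in A, F (shift s w) ∂(P x ω) =
          ∫ w in A, (∫ w', F w' ∂(P (w s) ω)) ∂(P x ω))
    -- (ii) jointly measurable transition densities with a Gaussian upper bound
    (p : Ω → ℝ≥0 → EucSp d → EucSp d → ℝ) (ct cg : ℝ) (hct : 0 < ct) (hcg : 0 < cg)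
    (hp : ∀ (ω) (x : EucSp d) (t : ℝ≥0), 0 < t → ∀ A : Set (EucSp d), MeasurableSet A →
      P x ω {w | w t ∈ A} = ENNReal.ofReal (∫ y in A, p ω t x y))
    (hgauss : ∀ (ω) (x y : EucSp d) (t : ℝ≥0), 0 < t → (t : ℝ) ≤ 1 →
      p ω t x y ≤ ct * (t : ℝ) ^ (-(d : ℝ) / 2) * Real.exp (-(cg * ‖x - y‖ ^ 2) / t))
    -- (iii) spectral gap for the killed semigroups in `L²(m_ω)`
    (c₃ : ℝ) (hc₃ : 0 < c₃)
    (hgap : ∀ (ω) (U : Set (EucSp d)), U.Nonempty → IsOpen U →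
      ∀ (t : ℝ≥0) (f : EucSp d → ℝ), Measurable f →
      Integrable (fun x => (f x) ^ 2 * Real.exp (2 * psiF T φ0 lam ℓ ω x)) volume →
      ∫ x, (killedSg P ω U t f x) ^ 2 * Real.exp (2 * psiF T φ0 lam ℓ ω x) ≤
        Real.exp (-2 * c₃ * (t : ℝ)) *
          ∫ x, (f x) ^ 2 * Real.exp (2 * psiF T φ0 lam ℓ ω x)) :
    ∀ δ : ℝ, 0 < δ → δ < 1 → ∀ b > (0:ℝ), ∃ c₄ > (0:ℝ),
      ∀ ℓ' : EucSp d, ‖ℓ'‖ = 1 → Real.sqrt (1 - δ ^ 2) < ⟪ℓ', ℓ⟫ →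
      ∀ L > (0:ℝ), ∀ ω : Ω,
        P 0 ω {w | ∀ t : ℝ≥0, (t : ℝ) < 3 * lam / c₃ * L →
            w t ∈ cyl ℓ' b L (L / Real.sqrt δ)} ≤
          ENNReal.ofReal (c₄ * Real.exp (-(lam / 2) * L)) := by
  intro δ hδ0 hδ1 b hb
  obtain ⟨C, hC⟩ := henv.exists_measureReal_stay_in_cyl_le hlam hℓ hct hcg hc₃ hMarkov hp hgauss
    hgap hδ0 hδ1 hb
  refine ⟨max C (Real.exp (c₃ / 3)), lt_max_of_lt_right (Real.exp_pos _),
    fun ℓ' hℓ' hip L hL ω => ?_⟩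
  have := henv.isProbabilityMeasure 0 ω
  rw [← ofReal_measureReal]
  refine ENNReal.ofReal_le_ofReal ?_
  rcases lt_or_ge (3 * lam / c₃ * L) 2 with hsmall | hlarge
  · rw [div_mul_eq_mul_div, div_lt_iff₀ hc₃] at hsmall
    calc _ ≤ (1 : ℝ) := measureReal_le_one
      _ ≤ Real.exp (c₃ / 3) * Real.exp (-(lam / 2) * L) := by
          rw [← Real.exp_add]
          exact Real.one_le_exp (by linarith)
      _ ≤ _ := by gcongr; exact le_max_right _ _
  · exact (hC ℓ' hℓ' hip L hL hlarge ω).trans (by gcongr; exact le_max_left _ _)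

theorem exit_time_tail_gradient_type (d : ℕ) (hd : 1 ≤ d) (η β' K : ℝ)
    (hη : 0 < η) (hβ' : 0 < β') (hK : 0 < K)
    (Ω : Type) [MeasurableSpace Ω] (Pr : Measure Ω)
    (T : EucSp d → Ω → Ω) (φ0 : Ω → ℝ)
    (lam : ℝ) (hlam : 0 < lam) (ℓ : EucSp d) (hℓ : ‖ℓ‖ = 1)
    (P : EucSp d → Ω → Measure (PathSp d))
    (henv : GradEnv d η β' K Pr T φ0 lam ℓ P)
    -- (i) Markov property of the quenched laws
    (hMarkov : ∀ (x : EucSp d) (ω : Ω) (s : ℝ≥0) (F : PathSp d → ℝ),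
      Measurable F → (∃ M, ∀ w, |F w| ≤ M) →
      ∀ A : Set (PathSp d), MeasurableSet[pathσ d s] A →
        ∫ w in A, F (shift s w) ∂(P x ω) =
          ∫ w in A, (∫ w', F w' ∂(P (w s) ω)) ∂(P x ω))
    -- (ii) jointly measurable transition densities with a Gaussian upper bound
    (p : Ω → ℝ≥0 → EucSp d → EucSp d → ℝ) (ct cg : ℝ) (hct : 0 < ct) (hcg : 0 < cg)
    (hp_meas : ∀ ω, Measurable fun q : ℝ≥0 × EucSp d × EucSp d => p ω q.1 q.2.1 q.2.2)
    (hp : ∀ (ω) (x : EucSp d) (t : ℝ≥0), 0 < t → ∀ A : Set (EucSp d), MeasurableSet A →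
      P x ω {w | w t ∈ A} = ENNReal.ofReal (∫ y in A, p ω t x y))
    (hgauss : ∀ (ω) (x y : EucSp d) (t : ℝ≥0), 0 < t → (t : ℝ) ≤ 1 →
      p ω t x y ≤ ct * (t : ℝ) ^ (-(d : ℝ) / 2) * Real.exp (-(cg * ‖x - y‖ ^ 2) / t))
    -- (iii) spectral gap for the killed semigroups in `L²(m_ω)`
    (c₃ : ℝ) (hc₃ : 0 < c₃)
    (hgap : ∀ (ω) (U : Set (EucSp d)), U.Nonempty → IsOpen U →
      ∀ (t : ℝ≥0) (f : EucSp d → ℝ), Measurable f →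
      Integrable (fun x => (f x) ^ 2 * Real.exp (2 * psiF T φ0 lam ℓ ω x)) volume →
      ∫ x, (killedSg P ω U t f x) ^ 2 * Real.exp (2 * psiF T φ0 lam ℓ ω x) ≤
        Real.exp (-2 * c₃ * (t : ℝ)) *
          ∫ x, (f x) ^ 2 * Real.exp (2 * psiF T φ0 lam ℓ ω x)) :
    ∀ δ : ℝ, 0 < δ → δ < 1 → ∀ b > (0:ℝ), ∃ c₄ > (0:ℝ),
      ∀ ℓ' : EucSp d, ‖ℓ'‖ = 1 → Real.sqrt (1 - δ ^ 2) < ⟪ℓ', ℓ⟫ →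
      ∀ L > (0:ℝ), ∀ ω : Ω,
        P 0 ω {w | ∀ t : ℝ≥0, (t : ℝ) < 3 * lam / c₃ * L →
            w t ∈ cyl ℓ' b L (L / Real.sqrt δ)} ≤
          ENNReal.ofReal (c₄ * Real.exp (-(lam / 2) * L)) :=
  exit_time_tail_gradient_type_general d η β' K Ω Pr T φ0 lam hlam ℓ hℓ P henv hMarkov p ct cg hct
    hcg hp hgauss c₃ hc₃ hgap

end
end

section
/- (Green function bound.) Let U ⊂ ℝ^d be a bounded domain containing 0 with diameter diam U, let c̃', c' > 0 and κ ∈ (0,1), and let p_U : (0,∞) × Ū × Ū → [0,∞) be jointly measurable and satisfy: (i) p_U(t,x,y) ≤ c̃' t^{−d/2} exp(−c'|x−y|²/t) for all 0 < t ≤ 1 and x, y ∈ Ū; (ii) the Chapman–Kolmogorov relation p_U(s+t,x,y) = ∫_U p_U(s,x,z) p_U(t,z,y) dz for all s, t > 0; (iii) ∫_U p_U(1/2,v,z) dz ≤ 1 − κ for all v ∈ Ū. Let g(x) = ∫₀^∞ p_U(t,0,x) dt. Then there exist a constant c̃ depending only on c̃', c', d and a constant c depending only on c̃', c', d, κ,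 diam U such that for all x ∈ U with x ≠ 0: g(x) ≤ c̃ |x|^{2−d} + c if d ≥ 3; g(x) ≤ c̃ log(diam U / |x|) + c if d = 2; and g(x) ≤ c if d = 1. -/
open MeasureTheory Filter Set
open scoped ENNReal

noncomputable section

/-- the Green function `g(x) = ∫_0^∞ p_U(t,0,x) dt` of a killed subtransition kernel,
as a Lebesgue integral. -/
def greenFn {d : ℕ} (p : ℝ → EucSp d → EucSp d → ℝ) (x : EucSp d) : ℝ≥0∞ :=
  ∫⁻ t in Set.Ioi (0:ℝ), ENNReal.ofReal (p t 0 x)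

/-!
Split `g(x) = ∫₀^∞ p_U(t,0,x) dt` at `t = 1` and write `r = |x|`.

For `t ≤ 1` only the Gaussian bound (i) is used. For `t ≤ r²`, the inequality `e^{-y} ≤ d!/y^d`
with `y = c'r²/t` bounds the integrand by `c̃' d! c'^{-d} r^{-d}`, which contributes `r^{2-d}`.
On `(r², 1]` the exponential is dropped, and `∫_{r²}^1 t^{-d/2} dt` is at most `2 r^{2-d}`,
`2 log(1/r)` or `2` according as `d ≥ 3`, `d = 2` or `d = 1`.

For `t > 1`, Chapman–Kolmogorov and the killing (iii) make the mass `∫_U p_U(s,0,z) dz` shrink by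
the factor `1 - κ` over every half unit of time, while
`p_U(t,0,x) ≤ (sup p_U(1/2,·,·)) · ∫_U p_U(t - 1/2,0,w) dw`. The tail is thus dominated by a
geometric series, whose sum depends only on `κ`, the Gaussian bound at times in `[1/2, 1]` and
`|U| ≤ |B(0, diam U)|`.
-/

open Real
open scoped Nat

theorem ofReal_intervalIntegral_eq_lintegral_Ioc {f : ℝ → ℝ} {a b : ℝ} (hab : a ≤ b)
    (hf : IntervalIntegrable f volume a b) (hf0 : ∀ t ∈ Ioc a b, 0 ≤ f t) :
    ENNReal.ofReal (∫ t in a..b, f t) = ∫⁻ t in Ioc a b, ENNReal.ofReal (f t) := by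
  rw [intervalIntegral.integral_of_le hab]
  exact ofReal_integral_eq_lintegral_ofReal hf.1
    ((ae_restrict_iff' measurableSet_Ioc).2 (ae_of_all _ hf0))

theorem ofReal_integral_mul_le_lintegral {α : Type*} [MeasurableSpace α] {μ : Measure α}
    {f g : α → ℝ} (hf : 0 ≤ f) (hg : 0 ≤ g) (hfm : AEStronglyMeasurable f μ)
    (hgm : AEStronglyMeasurable g μ) :
    ENNReal.ofReal (∫ x, f x * g x ∂μ) ≤ ∫⁻ x, ENNReal.ofReal (f x) * ENNReal.ofReal (g x) ∂μ := by
  rw [integral_eq_lintegral_of_nonneg_ae (ae_of_all _ fun x => mul_nonneg (hf x) (hg x))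
    (hfm.mul hgm)]
  exact ENNReal.ofReal_toReal_le.trans_eq (lintegral_congr fun x => ENNReal.ofReal_mul (hf x))

theorem lintegral_Ioc_rpow_le_of_lt_neg_one {a s : ℝ} (ha : 0 < a) (hs : s < -1) :
    ∫⁻ t in Ioc a 1, ENNReal.ofReal (t ^ s) ≤ ENNReal.ofReal (-a ^ (s + 1) / (s + 1)) := by
  rw [← integral_Ioi_rpow_of_lt hs ha, ofReal_integral_eq_lintegral_ofReal
    (integrableOn_Ioi_rpow_of_lt hs ha)
    ((ae_restrict_iff' measurableSet_Ioi).2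
      (ae_of_all _ fun t ht => (rpow_pos_of_pos (ha.trans ht) s).le))]
  exact lintegral_mono_set Ioc_subset_Ioi_self

theorem lintegral_Ioc_inv_eq {a : ℝ} (ha : 0 < a) :
    ∫⁻ t in Ioc a 1, ENNReal.ofReal t⁻¹ = ENNReal.ofReal (-log a) := by
  rcases le_or_gt a 1 with ha1 | ha1
  · have h0 : (0 : ℝ) ∉ uIcc a 1 := by rw [uIcc_of_le ha1]; exact fun h => ha.not_ge h.1
    rw [← ofReal_intervalIntegral_eq_lintegral_Ioc ha1 (intervalIntegral.intervalIntegrable_inv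
      (f := fun t => t) (fun t ht => ne_of_mem_of_not_mem ht h0) (continuousOn_id' _))
      (fun t ht => (inv_pos.2 (ha.trans ht.1)).le), integral_inv h0, log_div one_ne_zero ha.ne',
      log_one, zero_sub]
  · rw [Ioc_eq_empty_of_le ha1.le, Measure.restrict_empty, lintegral_zero_measure,
      ENNReal.ofReal_eq_zero.2 (neg_nonpos.2 (log_nonneg ha1.le))]

theorem lintegral_Ioc_zero_one_rpow {s : ℝ} (hs : -1 < s) :
    ∫⁻ t in Ioc 0 1, ENNReal.ofReal (t ^ s) = ENNReal.ofReal (1 / (s + 1)) := by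
  rw [← ofReal_intervalIntegral_eq_lintegral_Ioc zero_le_one
    (intervalIntegral.intervalIntegrable_rpow' hs) (fun t ht => (rpow_pos_of_pos ht.1 s).le),
    integral_rpow (Or.inl hs), one_rpow, zero_rpow (by linarith), sub_zero]

theorem exp_neg_le_factorial_div_pow {y : ℝ} (hy : 0 < y) (n : ℕ) : exp (-y) ≤ n ! / y ^ n := by
  rw [exp_neg, ← inv_div]
  exact inv_anti₀ (by positivity) (pow_div_factorial_le_exp (x := y) hy.le n)

def gaussianBound (d : ℕ) (ct c' t r : ℝ) : ℝ :=
  ct * t ^ (-(d : ℝ) / 2) * exp (-(c' * r ^ 2) / t)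

theorem gaussianBound_le_rpow {d : ℕ} {ct c' t : ℝ} (hct : 0 ≤ ct) (hc' : 0 ≤ c') (ht : 0 ≤ t)
    (r : ℝ) : gaussianBound d ct c' t r ≤ ct * t ^ (-(d : ℝ) / 2) := by
  refine mul_le_of_le_one_right (by positivity) (exp_le_one_iff.2 ?_)
  rw [neg_div]
  exact neg_nonpos.2 (by positivity)

theorem gaussianBound_le_of_le {d : ℕ} {ct c' s t : ℝ} (hct : 0 ≤ ct) (hc' : 0 ≤ c') (hs : 0 < s)
    (hst : s ≤ t) (r : ℝ) : gaussianBound d ct c' t r ≤ ct * s ^ (-(d : ℝ) / 2) :=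
  (gaussianBound_le_rpow hct hc' (hs.trans_le hst).le r).trans <| mul_le_mul_of_nonneg_left
    (rpow_le_rpow_of_nonpos hs hst (by rw [neg_div]; exact neg_nonpos.2 (by positivity))) hct

theorem gaussianBound_le_of_le_sq {d : ℕ} {ct c' r t : ℝ} (hct : 0 ≤ ct) (hc' : 0 < c')
    (hr : 0 < r) (ht : 0 < t) (htr : t ≤ r ^ 2) :
    gaussianBound d ct c' t r ≤ ct * d ! / c' ^ d * r ^ (-(d : ℝ)) := by
  have hpow : t ^ (-(d : ℝ) / 2) * t ^ d ≤ r ^ (-(d : ℝ)) * (r ^ 2) ^ d := by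
    rw [← rpow_natCast t, ← rpow_add ht, ← pow_mul, ← rpow_natCast r, ← rpow_add hr]
    calc t ^ (-(d : ℝ) / 2 + d) = t ^ ((d : ℝ) / 2) := by ring_nf
      _ ≤ (r ^ 2) ^ ((d : ℝ) / 2) := rpow_le_rpow ht.le htr (by positivity)
      _ = r ^ (-(d : ℝ) + ((2 * d : ℕ) : ℝ)) := by
        rw [← rpow_natCast r 2, ← rpow_mul hr.le]; push_cast; ring_nf
  calc gaussianBound d ct c' t r
      ≤ ct * t ^ (-(d : ℝ) / 2) * (d ! / (c' * r ^ 2 / t) ^ d) := by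
        have hexp := exp_neg_le_factorial_div_pow (y := c' * r ^ 2 / t) (by positivity) d
        rw [← neg_div] at hexp
        unfold gaussianBound
        gcongr
    _ = ct * d ! / c' ^ d * (t ^ (-(d : ℝ) / 2) * t ^ d / (r ^ 2) ^ d) := by
        rw [div_pow, mul_pow]
        field_simp
    _ ≤ ct * d ! / c' ^ d * (r ^ (-(d : ℝ)) * (r ^ 2) ^ d / (r ^ 2) ^ d) := by gcongr
    _ = ct * d ! / c' ^ d * r ^ (-(d : ℝ)) := by
        rw [mul_div_cancel_right₀ _ (by positivity)]

theorem lintegral_Ioc_gaussianBound_le {d : ℕ} {ct c' r : ℝ} (hct : 0 ≤ ct) (hc' : 0 < c')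
    (hr : 0 < r) :
    ∫⁻ t in Ioc 0 1, ENNReal.ofReal (gaussianBound d ct c' t r) ≤
      ENNReal.ofReal (ct * d ! / c' ^ d * r ^ ((2 : ℝ) - d)) +
        ENNReal.ofReal ct * ∫⁻ t in Ioc (r ^ 2) 1, ENNReal.ofReal (t ^ (-(d : ℝ) / 2)) := by
  have hr2 : 0 < r ^ 2 := by positivity
  have hnear : ∫⁻ t in Ioc 0 (r ^ 2), ENNReal.ofReal (gaussianBound d ct c' t r) ≤
      ENNReal.ofReal (ct * d ! / c' ^ d * r ^ ((2 : ℝ) - d)) := by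
    calc _ ≤ ∫⁻ _ in Ioc 0 (r ^ 2), ENNReal.ofReal (ct * d ! / c' ^ d * r ^ (-(d : ℝ))) :=
          setLIntegral_mono' measurableSet_Ioc fun t ht =>
            ENNReal.ofReal_le_ofReal (gaussianBound_le_of_le_sq hct hc' hr ht.1 ht.2)
      _ = ENNReal.ofReal (ct * d ! / c' ^ d * r ^ (-(d : ℝ)) * r ^ 2) := by
          rw [setLIntegral_const, Real.volume_Ioc, sub_zero, ← ENNReal.ofReal_mul (by positivity)]
      _ = ENNReal.ofReal (ct * d ! / c' ^ d * r ^ ((2 : ℝ) - d)) := by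
          rw [mul_assoc, ← rpow_natCast r 2, ← rpow_add hr]
          ring_nf
  have hfar : ∫⁻ t in Ioc (r ^ 2) 1, ENNReal.ofReal (gaussianBound d ct c' t r) ≤
      ENNReal.ofReal ct * ∫⁻ t in Ioc (r ^ 2) 1, ENNReal.ofReal (t ^ (-(d : ℝ) / 2)) := by
    rw [← lintegral_const_mul' _ _ ENNReal.ofReal_ne_top]
    refine setLIntegral_mono' measurableSet_Ioc fun t ht => ?_
    rw [← ENNReal.ofReal_mul hct]
    exact ENNReal.ofReal_le_ofReal (gaussianBound_le_rpow hct hc'.le (hr2.trans ht.1).le r)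
  calc _ ≤ ∫⁻ t in Ioc 0 (r ^ 2) ∪ Ioc (r ^ 2) 1, ENNReal.ofReal (gaussianBound d ct c' t r) :=
        lintegral_mono_set Ioc_subset_Ioc_union_Ioc
    _ ≤ _ := (lintegral_union_le _ _ _).trans (add_le_add hnear hfar)

theorem lintegral_Ioc_gaussianBound_le_of_three_le {d : ℕ} {ct c' r : ℝ} (hd : 3 ≤ d)
    (hct : 0 ≤ ct) (hc' : 0 < c') (hr : 0 < r) :
    ∫⁻ t in Ioc 0 1, ENNReal.ofReal (gaussianBound d ct c' t r) ≤
      ENNReal.ofReal ((ct * d ! / c' ^ d + 2 * ct) * r ^ ((2 : ℝ) - d)) := by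
  have hd' : (3 : ℝ) ≤ d := by exact_mod_cast hd
  have hrd : 0 < r ^ ((2 : ℝ) - d) := rpow_pos_of_pos hr _
  have hfar : ∫⁻ t in Ioc (r ^ 2) 1, ENNReal.ofReal (t ^ (-(d : ℝ) / 2)) ≤
      ENNReal.ofReal (2 * r ^ ((2 : ℝ) - d)) := by
    refine (lintegral_Ioc_rpow_le_of_lt_neg_one (by positivity) (by linarith)).trans
      (ENNReal.ofReal_le_ofReal ?_)
    rw [← rpow_natCast r 2, ← rpow_mul hr.le, div_le_iff_of_neg (by linarith)]
    ring_nf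
    nlinarith
  calc _ ≤ _ := lintegral_Ioc_gaussianBound_le hct hc' hr
    _ ≤ ENNReal.ofReal (ct * d ! / c' ^ d * r ^ ((2 : ℝ) - d)) +
          ENNReal.ofReal ct * ENNReal.ofReal (2 * r ^ ((2 : ℝ) - d)) := by gcongr
    _ = _ := by
      rw [← ENNReal.ofReal_mul hct, ← ENNReal.ofReal_add (by positivity) (by positivity)]
      ring_nf

theorem lintegral_Ioc_gaussianBound_two_le {ct c' r D : ℝ} (hct : 0 ≤ ct) (hc' : 0 < c')
    (hr : 0 < r) (hrD : r ≤ D) :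
    ∫⁻ t in Ioc 0 1, ENNReal.ofReal (gaussianBound 2 ct c' t r) ≤
      ENNReal.ofReal (ct * 2 ! / c' ^ 2 + 2 * ct * log (D / r) + 2 * ct * |log D|) := by
  have hfar : ∫⁻ t in Ioc (r ^ 2) 1, ENNReal.ofReal (t ^ (-((2 : ℕ) : ℝ) / 2)) ≤
      ENNReal.ofReal (2 * log (D / r) + 2 * |log D|) := by
    simp_rw [show -((2 : ℕ) : ℝ) / 2 = -1 by norm_num, rpow_neg_one]
    rw [lintegral_Ioc_inv_eq (by positivity), Real.log_pow, log_div (hr.trans_le hrD).ne' hr.ne']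
    refine ENNReal.ofReal_le_ofReal ?_
    push_cast
    linarith [neg_abs_le (log D)]
  have hDr : 0 ≤ log (D / r) := log_nonneg ((one_le_div hr).2 hrD)
  calc _ ≤ _ := lintegral_Ioc_gaussianBound_le hct hc' hr
    _ ≤ ENNReal.ofReal (ct * 2 ! / c' ^ 2 * r ^ ((2 : ℝ) - (2 : ℕ))) +
          ENNReal.ofReal ct * ENNReal.ofReal (2 * log (D / r) + 2 * |log D|) := by gcongr
    _ = _ := by
      rw [← ENNReal.ofReal_mul hct, ← ENNReal.ofReal_add (by positivity) (by positivity)]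
      norm_num
      ring_nf

theorem lintegral_Ioc_gaussianBound_one_le {ct c' r D : ℝ} (hct : 0 ≤ ct) (hc' : 0 < c')
    (hr : 0 < r) (hrD : r ≤ D) :
    ∫⁻ t in Ioc 0 1, ENNReal.ofReal (gaussianBound 1 ct c' t r) ≤
      ENNReal.ofReal (ct * 1 ! / c' ^ 1 * D + 2 * ct) := by
  have hfar : ∫⁻ t in Ioc (r ^ 2) 1, ENNReal.ofReal (t ^ (-((1 : ℕ) : ℝ) / 2)) ≤
      ENNReal.ofReal 2 := by
    calc _ ≤ ∫⁻ t in Ioc 0 1, ENNReal.ofReal (t ^ (-((1 : ℕ) : ℝ) / 2)) :=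
          lintegral_mono_set (Ioc_subset_Ioc_left (by positivity))
      _ = ENNReal.ofReal 2 := by rw [lintegral_Ioc_zero_one_rpow (by norm_num)]; norm_num
  calc _ ≤ _ := lintegral_Ioc_gaussianBound_le hct hc' hr
    _ ≤ ENNReal.ofReal (ct * 1 ! / c' ^ 1 * D) + ENNReal.ofReal ct * ENNReal.ofReal 2 := by
        gcongr
        norm_num [hrD]
    _ = _ := by
      have hD : 0 ≤ D := hr.le.trans hrD
      rw [← ENNReal.ofReal_mul hct, ← ENNReal.ofReal_add (by positivity) (by positivity)]
      ring_nf

theorem lintegral_Ici_le_of_le_mul_shift {M : ℝ → ℝ≥0∞} {a h : ℝ} {K q : ℝ≥0∞} (hh : 0 < h)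
    (hbase : ∀ s ∈ Ico a (a + h), M s ≤ K) (hshift : ∀ s, a ≤ s → M (s + h) ≤ q * M s) :
    ∫⁻ s in Ici a, M s ≤ K * ENNReal.ofReal h * (1 - q)⁻¹ := by
  have hdecay : ∀ n : ℕ, ∀ s ∈ Ico (a + n * h) (a + n * h + h), M s ≤ K * q ^ n := by
    intro n
    induction n with
    | zero => simpa using hbase
    | succ n ih =>
      intro s ⟨hs₁, hs₂⟩
      push_cast at hs₁ hs₂
      have hprev : s - h ∈ Ico (a + n * h) (a + n * h + h) := ⟨by linarith, by linarith⟩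
      calc M s = M (s - h + h) := by rw [sub_add_cancel]
        _ ≤ q * M (s - h) := hshift _ (by nlinarith [hprev.1, (n.cast_nonneg : (0 : ℝ) ≤ n)])
        _ ≤ q * (K * q ^ n) := by gcongr; exact ih _ hprev
        _ = K * q ^ (n + 1) := by ring
  have hcover : Ici a ⊆ ⋃ n : ℕ, Ico (a + n * h) (a + n * h + h) := by
    intro s (hs : a ≤ s)
    have hfloor := Nat.floor_le (div_nonneg (sub_nonneg.2 hs) hh.le)
    have hlt_floor := Nat.lt_floor_add_one ((s - a) / h)
    refine mem_iUnion.2 ⟨⌊(s - a) / h⌋₊, ?_, ?_⟩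
    · rw [le_div_iff₀ hh] at hfloor; linarith
    · rw [div_lt_iff₀ hh] at hlt_floor; linarith
  calc ∫⁻ s in Ici a, M s
      ≤ ∑' n : ℕ, ∫⁻ s in Ico (a + n * h) (a + n * h + h), M s :=
        (lintegral_mono_set hcover).trans (lintegral_iUnion_le _ _)
    _ ≤ ∑' n : ℕ, K * q ^ n * ENNReal.ofReal h := by
        gcongr with n
        refine (setLIntegral_mono' measurableSet_Ico (hdecay n)).trans_eq ?_
        rw [setLIntegral_const, Real.volume_Ico, add_sub_cancel_left]
    _ = K * ENNReal.ofReal h * (1 - q)⁻¹ := by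
        simp_rw [mul_right_comm _ _ (ENNReal.ofReal h)]
        rw [ENNReal.tsum_mul_left, ENNReal.tsum_geometric]

theorem setLIntegral_le_mul_of_le_setLIntegral_mul {α : Type*} [MeasurableSpace α]
    {μ : Measure α} [SFinite μ] {U : Set α} (hU : MeasurableSet U) {f g : α → ℝ≥0∞}
    {k : α → α → ℝ≥0∞} {q : ℝ≥0∞} (hf : Measurable f) (hk : Measurable (Function.uncurry k))
    (hg : ∀ z ∈ U, g z ≤ ∫⁻ w in U, f w * k w z ∂μ) (hkq : ∀ w ∈ U, ∫⁻ z in U, k w z ∂μ ≤ q) :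
    ∫⁻ z in U, g z ∂μ ≤ q * ∫⁻ w in U, f w ∂μ := by
  calc ∫⁻ z in U, g z ∂μ ≤ ∫⁻ z in U, ∫⁻ w in U, f w * k w z ∂μ ∂μ := setLIntegral_mono' hU hg
    _ = ∫⁻ w in U, f w * ∫⁻ z in U, k w z ∂μ ∂μ := by
        rw [lintegral_lintegral_swap ((hf.comp measurable_snd).mul
          (hk.comp measurable_swap)).aemeasurable]
        exact lintegral_congr fun w => lintegral_const_mul _ (hk.comp measurable_prodMk_left)
    _ ≤ ∫⁻ w in U, f w * q ∂μ := setLIntegral_mono' hU fun w hw => by gcongr; exact hkq w hw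
    _ = q * ∫⁻ w in U, f w ∂μ := by rw [lintegral_mul_const _ hf, mul_comm]

theorem lintegral_Ioi_le_of_chapmanKolmogorov {α : Type*} [MeasurableSpace α] {μ : Measure α}
    [SFinite μ] {U : Set α} (hU : MeasurableSet U) {P : ℝ → α → α → ℝ≥0∞} {h : ℝ}
    {A q : ℝ≥0∞} (hh : 0 < h) (hP : ∀ t, Measurable (Function.uncurry (P t)))
    (hA : ∀ t ∈ Icc h (2 * h), ∀ y ∈ U, ∀ z ∈ U, P t y z ≤ A)
    (hCK : ∀ s, 0 < s → ∀ y ∈ U, ∀ z ∈ U, P (s + h) y z ≤ ∫⁻ w in U, P s y w * P h w z ∂μ)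
    (hq : ∀ w ∈ U, ∫⁻ z in U, P h w z ∂μ ≤ q) {x y : α} (hx : x ∈ U) (hy : y ∈ U) :
    ∫⁻ t in Ioi (2 * h), P t y x ≤ A * (A * μ U) * ENNReal.ofReal h * (1 - q)⁻¹ := by
  have hPy : ∀ s, Measurable (P s y) := fun s => (hP s).comp measurable_prodMk_left
  set mass : ℝ → ℝ≥0∞ := fun s => ∫⁻ z in U, P s y z ∂μ
  have hmass_shift : ∀ s, 0 < s → mass (s + h) ≤ q * mass s := fun s hs =>
    setLIntegral_le_mul_of_le_setLIntegral_mul hU (hPy s) (hP h)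
      (hCK s hs y hy) hq
  have hmass_base : ∀ s ∈ Icc h (2 * h), mass s ≤ A * μ U := fun s hs =>
    (setLIntegral_mono' hU (hA s hs y hy)).trans_eq (setLIntegral_const _ _)
  have hpoint : ∀ t, h < t → P t y x ≤ A * mass (t - h) := by
    intro t ht
    calc P t y x = P (t - h + h) y x := by rw [sub_add_cancel]
      _ ≤ ∫⁻ w in U, P (t - h) y w * P h w x ∂μ := hCK _ (by linarith) y hy x hx
      _ ≤ ∫⁻ w in U, P (t - h) y w * A ∂μ := setLIntegral_mono' hU fun w hw => by
          gcongr; exact hA h ⟨le_rfl, by linarith⟩ w hw x hx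
      _ = A * mass (t - h) := by
          rw [lintegral_mul_const _ (hPy _), mul_comm]
  calc ∫⁻ t in Ioi (2 * h), P t y x ≤ ∫⁻ t in Ici (2 * h), A * mass (t - h) :=
        (lintegral_mono_set Ioi_subset_Ici_self).trans
          (setLIntegral_mono' measurableSet_Ici fun t ht => hpoint t (by linarith [ht.out]))
    _ ≤ _ := by
        refine lintegral_Ici_le_of_le_mul_shift hh (fun t ht => ?_) (fun t ht => ?_)
        · gcongr; exact hmass_base _ ⟨by linarith [ht.1], by linarith [ht.2]⟩
        · rw [show t + h - h = t - h + h by ring, ← mul_left_comm]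
          gcongr; exact hmass_shift _ (by linarith)

/-- `ct * (1/2) ^ (-d/2)` bounds `p_U` at times in `[1/2, 1]`. -/
def tailBound (d : ℕ) (ct κ D : ℝ) : ℝ≥0∞ :=
  ENNReal.ofReal (ct * (1 / 2) ^ (-(d : ℝ) / 2)) *
    (ENNReal.ofReal (ct * (1 / 2) ^ (-(d : ℝ) / 2)) * volume (Metric.closedBall (0 : EucSp d) D)) *
    ENNReal.ofReal (1 / 2) * (1 - ENNReal.ofReal (1 - κ))⁻¹

theorem tailBound_ne_top {d : ℕ} {ct κ : ℝ} (hκ : 0 < κ) (D : ℝ) : tailBound d ct κ D ≠ ⊤ := by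
  have hq : 1 - ENNReal.ofReal (1 - κ) ≠ 0 :=
    (tsub_pos_of_lt (ENNReal.ofReal_lt_one.2 (by linarith))).ne'
  exact ENNReal.mul_ne_top (ENNReal.mul_ne_top (ENNReal.mul_ne_top ENNReal.ofReal_ne_top
    (ENNReal.mul_ne_top ENNReal.ofReal_ne_top measure_closedBall_lt_top.ne))
    ENNReal.ofReal_ne_top) (ENNReal.inv_ne_top.2 hq)

theorem greenFn_le_add_tailBound {d : ℕ} {ct c' κ : ℝ} (hct : 0 ≤ ct) (hc' : 0 ≤ c')
    {U : Set (EucSp d)} (hU : MeasurableSet U) (hUb : Bornology.IsBounded U)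
    (hU0 : (0 : EucSp d) ∈ U) {p : ℝ → EucSp d → EucSp d → ℝ}
    (hm : Measurable (fun q : ℝ × EucSp d × EucSp d => p q.1 q.2.1 q.2.2))
    (hpnn : ∀ t x y, 0 ≤ p t x y)
    (hGauss : ∀ t, 0 < t → t ≤ 1 → ∀ x ∈ U, ∀ y ∈ U, p t x y ≤ gaussianBound d ct c' t ‖x - y‖)
    (hCK : ∀ s, 0 < s → ∀ x ∈ U, ∀ y ∈ U,
      p (s + 1 / 2) x y = ∫ z in U, p s x z * p (1 / 2) z y)
    (hkill : ∀ v ∈ U, ∫ z in U, p (1 / 2) v z ≤ 1 - κ) {x : EucSp d} (hx : x ∈ U) :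
    greenFn p x ≤ (∫⁻ t in Ioc 0 1, ENNReal.ofReal (gaussianBound d ct c' t ‖x‖)) +
      tailBound d ct κ (Metric.diam U) := by
  have hUball : U ⊆ Metric.closedBall 0 (Metric.diam U) := fun y hy =>
    Metric.mem_closedBall.2 (Metric.dist_le_diam_of_mem hUb hy hU0)
  have hA : ∀ t ∈ Icc (1 / 2 : ℝ) (2 * (1 / 2)), ∀ y ∈ U, ∀ z ∈ U,
      p t y z ≤ ct * (1 / 2) ^ (-(d : ℝ) / 2) := fun t ⟨ht₁, ht₂⟩ y hy z hz =>
    (hGauss t (by linarith) (by linarith) y hy z hz).trans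
      (gaussianBound_le_of_le hct hc' one_half_pos ht₁ _)
  have hpm : ∀ t, Measurable (Function.uncurry (p t)) := fun t =>
    hm.comp (measurable_const.prodMk measurable_id)
  have hCK' : ∀ s, 0 < s → ∀ y ∈ U, ∀ z ∈ U, ENNReal.ofReal (p (s + 1 / 2) y z) ≤
      ∫⁻ w in U, ENNReal.ofReal (p s y w) * ENNReal.ofReal (p (1 / 2) w z) := by
    intro s hs y hy z hz
    rw [hCK s hs y hy z hz]
    exact ofReal_integral_mul_le_lintegral (hpnn _ _) (fun w => hpnn _ _ _)
      ((hpm _).comp measurable_prodMk_left).aestronglyMeasurable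
      ((hpm _).comp measurable_prodMk_right).aestronglyMeasurable
  have hkill' : ∀ v ∈ U, ∫⁻ z in U, ENNReal.ofReal (p (1 / 2) v z) ≤ ENNReal.ofReal (1 - κ) := by
    intro v hv
    have hint : IntegrableOn (p (1 / 2) v) U :=
      Measure.integrableOn_of_bounded (measure_mono hUball |>.trans_lt measure_closedBall_lt_top).ne
        ((hpm _).comp measurable_prodMk_left).aestronglyMeasurable
        ((ae_restrict_iff' hU).2 (ae_of_all _ fun z hz => by
          rw [Real.norm_eq_abs, abs_of_nonneg (hpnn _ _ _)]
          exact hA _ ⟨le_rfl, by norm_num⟩ v hv z hz))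
    rw [← ofReal_integral_eq_lintegral_ofReal hint (ae_of_all _ fun z => hpnn _ _ _)]
    exact ENNReal.ofReal_le_ofReal (hkill v hv)
  have htail := lintegral_Ioi_le_of_chapmanKolmogorov hU one_half_pos
    (P := fun t y z => ENNReal.ofReal (p t y z)) (fun t => (hpm t).ennreal_ofReal)
    (fun t ht y hy z hz => ENNReal.ofReal_le_ofReal (hA t ht y hy z hz)) hCK' hkill' hx hU0
  rw [greenFn, ← Ioc_union_Ioi_eq_Ioi (zero_le_one (α := ℝ)),
    lintegral_union measurableSet_Ioi Ioc_disjoint_Ioi_same]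
  refine add_le_add ?_ ?_
  · refine setLIntegral_mono' measurableSet_Ioc fun t ht => ENNReal.ofReal_le_ofReal ?_
    simpa using hGauss t ht.1 ht.2 0 hU0 x hx
  · calc _ = ∫⁻ t in Ioi (2 * (1 / 2 : ℝ)), ENNReal.ofReal (p t 0 x) := by norm_num
      _ ≤ _ := htail
      _ ≤ _ := by unfold tailBound; gcongr

theorem green_function_bound_general (d : ℕ) (ct c' : ℝ) (hct : 0 < ct) (hc' : 0 < c') :
    ∃ ctil > (0:ℝ), ∀ κ : ℝ, 0 < κ → κ < 1 → ∀ D : ℝ, ∃ c > (0:ℝ),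
      ∀ U : Set (EucSp d), IsOpen U → IsConnected U → Bornology.IsBounded U →
        (0 : EucSp d) ∈ U → Metric.diam U = D →
        ∀ p : ℝ → EucSp d → EucSp d → ℝ,
          Measurable (fun q : ℝ × EucSp d × EucSp d => p q.1 q.2.1 q.2.2) →
          (∀ t x y, 0 ≤ p t x y) →
          -- (i) Gaussian upper bound for small times
          (∀ t : ℝ, 0 < t → t ≤ 1 → ∀ x ∈ closure U, ∀ y ∈ closure U,
            p t x y ≤ ct * t ^ (-(d : ℝ) / 2) * Real.exp (-(c' * ‖x - y‖ ^ 2) / t)) →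
          -- (ii) Chapman–Kolmogorov relation
          (∀ s t : ℝ, 0 < s → 0 < t → ∀ x ∈ closure U, ∀ y ∈ closure U,
            p (s + t) x y = ∫ z in U, p s x z * p t z y) →
          -- (iii) uniform killing
          (∀ v ∈ closure U, ∫ z in U, p (1 / 2) v z ≤ 1 - κ) →
          ∀ x ∈ U, x ≠ 0 →
            (3 ≤ d →
              greenFn p x ≤ ENNReal.ofReal (ctil * ‖x‖ ^ ((2 : ℝ) - d) + c)) ∧
            (d = 2 →
              greenFn p x ≤ ENNReal.ofReal (ctil * Real.log (Metric.diam U / ‖x‖) + c)) ∧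
            (d = 1 → greenFn p x ≤ ENNReal.ofReal c) := by
  refine ⟨ct * d ! / c' ^ d + 2 * ct, by positivity, fun κ hκ _ D => ?_⟩
  set L := (tailBound d ct κ D).toReal
  have hL : 0 ≤ L := ENNReal.toReal_nonneg
  have hc : 0 < ct * d ! / c' ^ d * (1 + |D|) + 2 * ct * (1 + |log D|) := by positivity
  refine ⟨ct * d ! / c' ^ d * (1 + |D|) + 2 * ct * (1 + |log D|) + L, by positivity, ?_⟩
  intro U hUo _ hUb hU0 hdiam p hm hpnn hGauss hCK hkill x hx hx0
  have hr : 0 < ‖x‖ := norm_pos_iff.2 hx0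
  have hrD : ‖x‖ ≤ D := by simpa [hdiam] using Metric.dist_le_diam_of_mem hUb hx hU0
  have hD : 0 ≤ D := hr.le.trans hrD
  have hg : greenFn p x ≤
      (∫⁻ t in Ioc 0 1, ENNReal.ofReal (gaussianBound d ct c' t ‖x‖)) + ENNReal.ofReal L := by
    rw [ENNReal.ofReal_toReal (tailBound_ne_top hκ D), ← hdiam]
    exact greenFn_le_add_tailBound hct.le hc'.le hUo.measurableSet hUb hU0 hm hpnn
      (fun t ht ht1 y hy z hz => hGauss t ht ht1 y (subset_closure hy) z (subset_closure hz))
      (fun s hs y hy z hz => hCK s _ hs one_half_pos y (subset_closure hy) z (subset_closure hz))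
      (fun v hv => hkill v (subset_closure hv)) hx
  refine ⟨fun hd => ?_, fun hd => ?_, fun hd => ?_⟩
  · refine hg.trans ((add_le_add
      (lintegral_Ioc_gaussianBound_le_of_three_le hd hct.le hc' hr) le_rfl).trans ?_)
    rw [← ENNReal.ofReal_add (by positivity) hL]
    exact ENNReal.ofReal_le_ofReal (by linarith)
  · subst hd
    refine hg.trans ((add_le_add
      (lintegral_Ioc_gaussianBound_two_le hct.le hc' hr hrD) le_rfl).trans ?_)
    have hDr : 0 ≤ log (D / ‖x‖) := log_nonneg ((one_le_div hr).2 hrD)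
    have hC : 0 ≤ ct * 2 ! / c' ^ 2 := by positivity
    rw [← ENNReal.ofReal_add (by positivity) hL, hdiam]
    exact ENNReal.ofReal_le_ofReal (by nlinarith [mul_nonneg hC hDr, mul_nonneg hC (abs_nonneg D)])
  · subst hd
    refine hg.trans ((add_le_add
      (lintegral_Ioc_gaussianBound_one_le hct.le hc' hr hrD) le_rfl).trans ?_)
    have hC : 0 ≤ ct * 1 ! / c' ^ 1 := by positivity
    rw [← ENNReal.ofReal_add (by positivity) hL]
    exact ENNReal.ofReal_le_ofReal
      (by nlinarith [mul_le_mul_of_nonneg_left (le_abs_self D) hC, abs_nonneg (log D)])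

theorem green_function_bound (d : ℕ) (hd : 1 ≤ d) (ct c' : ℝ) (hct : 0 < ct) (hc' : 0 < c') :
    ∃ ctil > (0:ℝ), ∀ κ : ℝ, 0 < κ → κ < 1 → ∀ D : ℝ, ∃ c > (0:ℝ),
      ∀ U : Set (EucSp d), IsOpen U → IsConnected U → Bornology.IsBounded U →
        (0 : EucSp d) ∈ U → Metric.diam U = D →
        ∀ p : ℝ → EucSp d → EucSp d → ℝ,
          Measurable (fun q : ℝ × EucSp d × EucSp d => p q.1 q.2.1 q.2.2) →
          (∀ t x y, 0 ≤ p t x y) →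
          -- (i) Gaussian upper bound for small times
          (∀ t : ℝ, 0 < t → t ≤ 1 → ∀ x ∈ closure U, ∀ y ∈ closure U,
            p t x y ≤ ct * t ^ (-(d : ℝ) / 2) * Real.exp (-(c' * ‖x - y‖ ^ 2) / t)) →
          -- (ii) Chapman–Kolmogorov relation
          (∀ s t : ℝ, 0 < s → 0 < t → ∀ x ∈ closure U, ∀ y ∈ closure U,
            p (s + t) x y = ∫ z in U, p s x z * p t z y) →
          -- (iii) uniform killing
          (∀ v ∈ closure U, ∫ z in U, p (1 / 2) v z ≤ 1 - κ) →
          ∀ x ∈ U, x ≠ 0 →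
            (3 ≤ d →
              greenFn p x ≤ ENNReal.ofReal (ctil * ‖x‖ ^ ((2 : ℝ) - d) + c)) ∧
            (d = 2 →
              greenFn p x ≤ ENNReal.ofReal (ctil * Real.log (Metric.diam U / ‖x‖) + c)) ∧
            (d = 1 → greenFn p x ≤ ENNReal.ofReal c) :=
  green_function_bound_general d ct c' hct hc'

end
end
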